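/- arXiv:1609.00840 — 6 statements merged into one kernel-verified Lean document; each statement's English description precedes it below -/
import Mathlib

section
/- For any monic polynomial f of degree n ≥ 3 over ℂ with roots r_1, …, r_n (listed with multiplicity), the product of the values of the determinant polynomial H at the roots of f equals the second discriminant: ∏_{k=1}^n H(r_k) = ∏ (2r_k − r_i − r_j), where the right-hand product is over all triples (i, k, j) with 1 ≤ i < j ≤ n, k ≠ i, k ≠ j. Equivalently, since f is monic, Res_x(f, H) = D_2. -/
open Polynomial Finset

section Aux
variable {A : Type*} [CommRing A]

lemma sum_range_two_mul' (D : ℕ) (a : ℕ → A) :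
    ∑ m ∈ Finset.range (2*D), a m = ∑ q ∈ Finset.range D, (a (2*q) + a (2*q+1)) := by
  induction D with
  | zero => simp
  | succ D ih =>
      have h : 2*(D+1) = (2*D+1)+1 := by ring
      rw [h, Finset.sum_range_succ, Finset.sum_range_succ, Finset.sum_range_succ, ih]
      rw [add_assoc]

lemma two_mul_odd_sum (u : Polynomial A) (β : A) (D : ℕ)
    (hu : u.natDegree < 2*D) :
    2 * ∑ q ∈ Finset.range D, u.coeff (2*q+1) * β^(2*q+1) = u.eval β - u.eval (-β) := by
  rw [Polynomial.eval_eq_sum_range' hu, Polynomial.eval_eq_sum_range' hu,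
    ← Finset.sum_sub_distrib, sum_range_two_mul', Finset.mul_sum]
  refine Finset.sum_congr rfl fun q _ => ?_
  have h1 : (-β)^(2*q) = β^(2*q) := by
    rw [neg_pow, pow_mul, neg_one_sq, one_pow, one_mul]
  have h2 : (-β)^(2*q+1) = -β^(2*q+1) := by
    rw [pow_succ, pow_succ, h1, mul_neg]
  rw [h1, h2]; ring

lemma Ioi_prod_eq {m : ℕ} (f : Fin m → A) (i : Fin m) :
    ∏ j ∈ Finset.Ioi i, f j = ∏ j, if i < j then f j else 1 := by
  symm
  calc (∏ j, if i < j then f j else 1)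
      = ∏ j, (if j ∈ Finset.Ioi i then f j else 1) :=
        Finset.prod_congr rfl fun j _ => by simp [Finset.mem_Ioi]
    _ = ∏ j ∈ Finset.univ ∩ Finset.Ioi i, f j := Finset.prod_ite_mem _ _ _
    _ = ∏ j ∈ Finset.Ioi i, f j := by rw [Finset.univ_inter]

lemma prod_neg' {m : ℕ} (f : Fin m → A) :
    ∏ i, (-(f i)) = (-1)^m * ∏ i, f i := by
  have h : ∀ i : Fin m, -(f i) = (-1) * f i := fun i => by ring
  rw [Finset.prod_congr rfl fun i _ => h i, Finset.prod_mul_distrib,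
    Finset.prod_const, Finset.card_univ, Fintype.card_fin]

lemma prod_if_mul {m : ℕ} (F G : Fin m → Fin m → A) :
    (∏ i, ∏ j, if i < j then F i j * G i j else 1)
      = (∏ i, ∏ j, if i < j then F i j else 1) * (∏ i, ∏ j, if i < j then G i j else 1) := by
  rw [← Finset.prod_mul_distrib]
  refine Finset.prod_congr rfl fun i _ => ?_
  rw [← Finset.prod_mul_distrib]
  refine Finset.prod_congr rfl fun j _ => ?_
  split <;> simp

lemma PP_split {m : ℕ} (F : Fin (m+1) → Fin (m+1) → A) :
    (∏ i, ∏ j, if i < j then F i j else 1)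
      = (∏ i : Fin m, ∏ j : Fin m, if i < j then F i.castSucc j.castSucc else 1)
        * ∏ i : Fin m, F i.castSucc (Fin.last m) := by
  rw [Fin.prod_univ_castSucc (f := fun i => ∏ j, if i < j then F i j else 1)]
  have h2 : (∏ j, if Fin.last m < j then F (Fin.last m) j else 1) = 1 :=
    Finset.prod_eq_one fun j _ => by rw [if_neg (not_lt.mpr (Fin.le_last j))]
  have h1 : ∀ i : Fin m, (∏ j, if i.castSucc < j then F i.castSucc j else 1)
      = (∏ j : Fin m, if i < j then F i.castSucc j.castSucc else 1) * F i.castSucc (Fin.last m) := by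
    intro i
    rw [Fin.prod_univ_castSucc (f := fun j => if i.castSucc < j then F i.castSucc j else 1)]
    rw [if_pos (Fin.castSucc_lt_last i)]
    refine congrArg (· * F i.castSucc (Fin.last m)) ?_
    exact Finset.prod_congr rfl fun j _ => if_congr Fin.castSucc_lt_castSucc_iff rfl rfl
  rw [Finset.prod_congr rfl fun i _ => h1 i, Finset.prod_mul_distrib, h2, mul_one]

lemma symsplit : ∀ (m : ℕ) (x : Fin m → A),
    (∏ i, ∏ j, (x i + x j))
      = (2^m * ∏ i, x i) * (∏ i, ∏ j, if i < j then (x i + x j) else 1)^2 := by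
  intro m
  induction m with
  | zero => intro x; simp
  | succ m ih =>
      intro x
      rw [Fin.prod_univ_castSucc (f := fun i => ∏ j, (x i + x j))]
      have hinner : ∀ i : Fin (m+1), (∏ j, (x i + x j))
          = (∏ j : Fin m, (x i + x j.castSucc)) * (x i + x (Fin.last m)) :=
        fun i => Fin.prod_univ_castSucc (f := fun j => (x i + x j))
      rw [Finset.prod_congr rfl fun i _ => hinner i.castSucc, Finset.prod_mul_distrib,
        hinner (Fin.last m), ih (fun i => x i.castSucc),
        PP_split (F := fun i j => x i + x j), Fin.prod_univ_castSucc (f := fun i => x i)]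
      have hsym : (∏ j : Fin m, (x (Fin.last m) + x j.castSucc))
          = ∏ i : Fin m, (x i.castSucc + x (Fin.last m)) :=
        Finset.prod_congr rfl fun j _ => add_comm _ _
      rw [hsym]
      ring

end Aux


section Core
variable {A : Type*} [CommRing A]

noncomputable def bprod {d : ℕ} (β : Fin d → A) : Polynomial A := ∏ i, (X - C (β i))

noncomputable def MM (e : ℕ) (β : Fin (e+2) → A) : Matrix (Fin (e+1)) (Fin (e+1)) A :=
  Matrix.of fun p q => if (p:ℕ) ≤ 2*(q:ℕ)+1 then (bprod β).coeff (2*(q:ℕ)+1-(p:ℕ)) else 0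

lemma bprod_natDegree_le {d : ℕ} (β : Fin d → A) : (bprod β).natDegree ≤ d := by
  refine le_trans (Polynomial.natDegree_prod_le _ _) ?_
  refine le_trans (Finset.sum_le_sum fun i _ => Polynomial.natDegree_X_sub_C_le (β i)) ?_
  simp

lemma bprod_eval_root {d : ℕ} (β : Fin d → A) (i : Fin d) : (bprod β).eval (β i) = 0 := by
  rw [bprod, Polynomial.eval_prod]
  refine Finset.prod_eq_zero (Finset.mem_univ i) ?_
  simp

lemma key1 (e : ℕ) (β : Fin (e+2) → A) (p i : Fin (e+1)) :
    2 * ∑ q : Fin (e+1), (MM e β) p q * (β i.castSucc)^(2*(q:ℕ)+1)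
      = (-(bprod β).eval (-(β i.castSucc))) * (-(β i.castSucc))^(p:ℕ) := by
  set c : A := β i.castSucc with hc
  set g : Polynomial A := (bprod β) * X^(p:ℕ) with hg
  have hdeg : g.natDegree ≤ 2*e+2 := by
    refine le_trans (Polynomial.natDegree_mul_le) ?_
    have h1 := bprod_natDegree_le β
    have h2 : (X^(p:ℕ) : Polynomial A).natDegree ≤ (p:ℕ) := Polynomial.natDegree_X_pow_le _
    have h3 : (p:ℕ) ≤ e := Nat.lt_succ_iff.mp p.isLt
    omega
  have hentry : ∀ q : Fin (e+1),
      (MM e β) p q = g.coeff (2*(q:ℕ)+1) := by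
    intro q
    rw [hg, Polynomial.coeff_mul_X_pow']
    rfl
  calc 2 * ∑ q : Fin (e+1), (MM e β) p q * c^(2*(q:ℕ)+1)
      = 2 * ∑ q ∈ Finset.range (e+1), (g.coeff (2*q+1) * c^(2*q+1)) := by
        rw [Finset.sum_congr rfl fun q _ => by rw [hentry q],
          Fin.sum_univ_eq_sum_range (fun q => g.coeff (2*q+1) * c^(2*q+1)) (e+1)]
    _ = 2 * ∑ q ∈ Finset.range (e+2), (g.coeff (2*q+1) * c^(2*q+1)) := by
        have hz : g.coeff (2*(e+1)+1) = 0 :=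
          Polynomial.coeff_eq_zero_of_natDegree_lt (by omega)
        conv_rhs => rw [Finset.sum_range_succ]
        rw [hz, zero_mul, add_zero]
    _ = g.eval c - g.eval (-c) := two_mul_odd_sum g c (e+2) (by omega)
    _ = (-(bprod β).eval (-c)) * (-c)^(p:ℕ) := by
        rw [hg]
        simp only [Polynomial.eval_mul, Polynomial.eval_pow, Polynomial.eval_X, hc,
          bprod_eval_root β i.castSucc]
        ring

end Core

section Gen
variable {A : Type*} [CommRing A]

lemma gen_eq (e : ℕ) (β : Fin (e+2) → A) :
    (MM e β).det * ((∏ i : Fin (e+1), β i.castSucc)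
        * (∏ i : Fin (e+1), ∏ j, if i < j then ((β j.castSucc)^2 - (β i.castSucc)^2) else 1)
        * 2^(e+1))
    = (∏ i : Fin (e+2), ∏ j, if i < j then -(β i + β j) else 1)
        * ((∏ i : Fin (e+1), β i.castSucc)
        * (∏ i : Fin (e+1), ∏ j, if i < j then ((β j.castSucc)^2 - (β i.castSucc)^2) else 1)
        * 2^(e+1)) := by
  set V : Matrix (Fin (e+1)) (Fin (e+1)) A :=
    Matrix.of fun q i => (β i.castSucc) ^ (2*(q:ℕ)+1) with hV
  set W : Matrix (Fin (e+1)) (Fin (e+1)) A :=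
    Matrix.of fun p i => (-(bprod β).eval (-(β i.castSucc))) * (-(β i.castSucc))^(p:ℕ) with hW
  have hMVW : (2:A) • ((MM e β) * V) = W := by
    ext p i
    rw [Matrix.smul_apply, Matrix.mul_apply, smul_eq_mul]
    exact key1 e β p i
  have hE1 : W.det = 2^(e+1) * ((MM e β).det * V.det) := by
    rw [← hMVW, Matrix.det_smul, Matrix.det_mul]
    simp [Fintype.card_fin]
  have hdetW : W.det = (∏ i : Fin (e+1), (-(bprod β).eval (-(β i.castSucc))))
      * ∏ i : Fin (e+1), ∏ j, if i < j then ((-(β j.castSucc)) - (-(β i.castSucc))) else 1 := by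
    have h : W = Matrix.of (fun p i => (fun i : Fin (e+1) => -(bprod β).eval (-(β i.castSucc))) i
        * (Matrix.transpose (Matrix.vandermonde (fun i : Fin (e+1) => -(β i.castSucc)))) p i) := by
      ext p i
      simp [Matrix.vandermonde, hW, Matrix.transpose_apply]
    rw [h, Matrix.det_mul_row, Matrix.det_transpose, Matrix.det_vandermonde]
    exact congrArg _ (Finset.prod_congr rfl fun i _ => Ioi_prod_eq _ i)
  have hdetV : V.det = (∏ i : Fin (e+1), β i.castSucc)
      * ∏ i : Fin (e+1), ∏ j, if i < j then ((β j.castSucc)^2 - (β i.castSucc)^2) else 1 := by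
    have h : V = Matrix.of (fun q i => (fun i : Fin (e+1) => β i.castSucc) i
        * (Matrix.transpose (Matrix.vandermonde (fun i : Fin (e+1) => (β i.castSucc)^2))) q i) := by
      ext q i
      show (β i.castSucc) ^ (2*(q:ℕ)+1) = β i.castSucc * ((β i.castSucc)^2)^(q:ℕ)
      rw [← pow_mul, ← pow_succ']
    rw [h, Matrix.det_mul_row, Matrix.det_transpose, Matrix.det_vandermonde]
    exact congrArg _ (Finset.prod_congr rfl fun i _ => Ioi_prod_eq _ i)
  have hEV : (∏ i : Fin (e+1), (-(bprod β).eval (-(β i.castSucc))))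
      = ((-1:A)^(e+3))^(e+1) * ((2^(e+1) * ∏ i : Fin (e+1), β i.castSucc)
          * (∏ i : Fin (e+1), ∏ j, if i < j then (β i.castSucc + β j.castSucc) else 1)^2
          * ∏ i : Fin (e+1), (β i.castSucc + β (Fin.last (e+1)))) := by
    have h1 : ∀ i : Fin (e+1), (-(bprod β).eval (-(β i.castSucc)))
        = (-1:A)^(e+3) * ∏ j : Fin (e+2), (β i.castSucc + β j) := by
      intro i
      rw [bprod, Polynomial.eval_prod]
      have h2 : ∀ j : Fin (e+2), Polynomial.eval (-(β i.castSucc)) (X - C (β j))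
          = -(β i.castSucc + β j) := by
        intro j
        simp only [Polynomial.eval_sub, Polynomial.eval_X, Polynomial.eval_C]
        ring
      rw [Finset.prod_congr rfl fun j _ => h2 j, prod_neg',
        show (e+3) = (e+2)+1 from rfl, pow_succ]
      ring
    rw [Finset.prod_congr rfl fun i _ => h1 i, Finset.prod_mul_distrib,
      Finset.prod_const, Finset.card_univ, Fintype.card_fin]
    congr 1
    have h3 : ∀ i : Fin (e+1), (∏ j : Fin (e+2), (β i.castSucc + β j))
        = (∏ j : Fin (e+1), (β i.castSucc + β j.castSucc)) * (β i.castSucc + β (Fin.last (e+1))) :=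
      fun i => Fin.prod_univ_castSucc (f := fun j => β i.castSucc + β j)
    rw [Finset.prod_congr rfl fun i _ => h3 i, Finset.prod_mul_distrib,
      symsplit (e+1) (fun i => β i.castSucc)]
  have hT : (∏ i : Fin (e+2), ∏ j, if i < j then -(β i + β j) else 1)
      = ((∏ i : Fin (e+1), ∏ j, if i < j then (-1:A) else 1)
          * (∏ i : Fin (e+1), ∏ j, if i < j then (β i.castSucc + β j.castSucc) else 1))
        * ((-1:A)^(e+1) * ∏ i : Fin (e+1), (β i.castSucc + β (Fin.last (e+1)))) := by
    rw [PP_split (F := fun i j => -(β i + β j))]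
    congr 1
    · have h : ∀ i j : Fin (e+1), (if i < j then -(β i.castSucc + β j.castSucc) else 1)
          = if i < j then (-1:A) * (β i.castSucc + β j.castSucc) else 1 := by
        intro i j
        exact if_congr Iff.rfl (by ring) rfl
      rw [Finset.prod_congr rfl fun i _ => Finset.prod_congr rfl fun j _ => h i j]
      exact prod_if_mul _ _
    · exact prod_neg' _
  have hW2 : (∏ i : Fin (e+1), ∏ j, if i < j then ((-(β j.castSucc)) - (-(β i.castSucc))) else 1)
      = (∏ i : Fin (e+1), ∏ j, if i < j then (-1:A) else 1)
        * (∏ i : Fin (e+1), ∏ j, if i < j then (β j.castSucc - β i.castSucc) else 1) := by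
    have h : ∀ i j : Fin (e+1), (if i < j then ((-(β j.castSucc)) - (-(β i.castSucc))) else 1)
        = if i < j then (-1:A) * (β j.castSucc - β i.castSucc) else 1 := by
      intro i j
      exact if_congr Iff.rfl (by ring) rfl
    rw [Finset.prod_congr rfl fun i _ => Finset.prod_congr rfl fun j _ => h i j]
    exact prod_if_mul _ _
  have hQ : (∏ i : Fin (e+1), ∏ j, if i < j then ((β j.castSucc)^2 - (β i.castSucc)^2) else 1)
      = (∏ i : Fin (e+1), ∏ j, if i < j then (β j.castSucc - β i.castSucc) else 1)
        * (∏ i : Fin (e+1), ∏ j, if i < j then (β i.castSucc + β j.castSucc) else 1) := by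
    rw [← prod_if_mul]
    refine Finset.prod_congr rfl fun i _ => Finset.prod_congr rfl fun j _ => ?_
    exact if_congr Iff.rfl (by ring) rfl
  have hsgn : ((-1:A)^(e+3))^(e+1) = (-1:A)^(e+1) := by
    rw [← pow_mul]
    rcases Nat.even_or_odd (e+1) with h | h
    · rw [h.neg_one_pow, (h.mul_left (e+3)).neg_one_pow]
    · have h3 : Odd (e+3) := by
        rcases h with ⟨t, ht⟩
        exact ⟨t+1, by omega⟩
      rw [h.neg_one_pow, (h3.mul h).neg_one_pow]
  calc (MM e β).det * ((∏ i : Fin (e+1), β i.castSucc)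
        * (∏ i : Fin (e+1), ∏ j, if i < j then ((β j.castSucc)^2 - (β i.castSucc)^2) else 1)
        * 2^(e+1))
      = 2^(e+1) * ((MM e β).det * V.det) := by rw [hdetV]; ring
    _ = W.det := hE1.symm
    _ = _ := by
        rw [hdetW, hW2, hEV, hsgn, hT, hQ]
        ring

end Gen
section Cancel

lemma MM_det_eq_TT (e : ℕ) (β : Fin (e+2) → ℂ) :
    (MM e β).det = ∏ i : Fin (e+2), ∏ j, if i < j then -(β i + β j) else 1 := by
  set Xv : Fin (e+2) → MvPolynomial (Fin (e+2)) ℂ := fun i => MvPolynomial.X i with hXv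
  have hgen : (MM e Xv).det = ∏ i : Fin (e+2), ∏ j, if i < j then -(Xv i + Xv j) else 1 := by
    refine mul_right_cancel₀ ?_ (gen_eq e Xv)
    refine mul_ne_zero (mul_ne_zero ?_ ?_) ?_
    · refine Finset.prod_ne_zero_iff.mpr fun i _ => ?_
      exact MvPolynomial.X_ne_zero _
    · refine Finset.prod_ne_zero_iff.mpr fun i _ => ?_
      refine Finset.prod_ne_zero_iff.mpr fun j _ => ?_
      split
      · rename_i hij
        intro h
        have hne : (i.castSucc : Fin (e+2)) ≠ j.castSucc := by
          simp only [ne_eq, Fin.castSucc_inj]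
          exact ne_of_lt hij
        have h2 := congrArg (MvPolynomial.eval
          (fun t : Fin (e+2) => if t = j.castSucc then (2:ℂ) else 1)) h
        rw [hXv] at h2
        simp only [map_sub, map_pow, MvPolynomial.eval_X, map_zero] at h2
        simp [hne] at h2
        norm_num at h2
      · exact one_ne_zero
    · refine pow_ne_zero _ ?_
      intro h
      have h2 := congrArg (MvPolynomial.eval (fun _ : Fin (e+2) => (0:ℂ))) h
      rw [map_ofNat, map_zero] at h2
      norm_num at h2
  have φdet : (MvPolynomial.eval β) (MM e Xv).det = (MM e β).det := by
    rw [RingHom.map_det]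
    congr 1
    ext p q
    have hbp : (bprod Xv).map (MvPolynomial.eval β) = bprod β := by
      rw [bprod, bprod, Polynomial.map_prod]
      refine Finset.prod_congr rfl fun i _ => ?_
      rw [Polynomial.map_sub, Polynomial.map_X, Polynomial.map_C, hXv, MvPolynomial.eval_X]
    simp only [MM, RingHom.mapMatrix_apply, Matrix.map_apply, Matrix.of_apply,
      apply_ite (MvPolynomial.eval β), map_zero, ← Polynomial.coeff_map, hbp]
  have φT : (MvPolynomial.eval β) (∏ i : Fin (e+2), ∏ j, if i < j then -(Xv i + Xv j) else 1)
      = ∏ i : Fin (e+2), ∏ j, if i < j then -(β i + β j) else 1 := by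
    rw [map_prod]
    refine Finset.prod_congr rfl fun i _ => ?_
    rw [map_prod]
    refine Finset.prod_congr rfl fun j _ => ?_
    rw [apply_ite (MvPolynomial.eval β), map_neg, map_add, map_one, hXv,
      MvPolynomial.eval_X, MvPolynomial.eval_X]
  rw [← φdet, hgen, φT]

end Cancel


/-- The determinant polynomial `H` associated with `f` of degree `n`: the determinant of
the `(n-2) × (n-2)` matrix whose entry in (1-indexed) row `p`, column `q` is
`f⁽²ᑫ⁻ᵖ⁺¹⁾/(2q-p+1)!` (a Hasse derivative of `f`) when `2q - p + 1 ≥ 1`, and `0`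
when `2q - p + 1 ≤ 0`. (Below `p q : Fin (n-2)` are 0-indexed, so the derivative
order is `2q - p + 2`.) -/
noncomputable def Hdet {R : Type} [CommRing R] (n : ℕ) (f : Polynomial R) : Polynomial R :=
  Matrix.det (Matrix.of fun p q : Fin (n - 2) =>
    if (p : ℕ) ≤ 2 * (q : ℕ) + 1 then Polynomial.hasseDeriv (2 * (q : ℕ) + 2 - (p : ℕ)) f
    else 0)

/-- For a monic polynomial `f` of degree `n ≥ 3` over `ℂ` with roots
`r 0, …, r (n-1)` (with multiplicity), the product of the values of `H` at the roots of
`f` (which is the resultant `Res_x(f, H)` since `f` is monic) equals the second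
discriminant `D₂ = ∏_{i<j, k∉{i,j}} (2 r k - r i - r j)`. -/
theorem prod_Hdet_eval_roots_eq_secondDiscriminant
    (n : ℕ) (hn : 3 ≤ n) (r : Fin n → ℂ) (f : Polynomial ℂ)
    (hf : f = ∏ i : Fin n, (Polynomial.X - Polynomial.C (r i))) :
    (∏ k : Fin n, (Hdet n f).eval (r k)) =
      ∏ i : Fin n, ∏ j : Fin n, ∏ k : Fin n,
        if i < j ∧ k ≠ i ∧ k ≠ j then 2 * r k - r i - r j else 1 := by
  obtain ⟨m, rfl⟩ : ∃ m, n = m + 3 := ⟨n - 3, by omega⟩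
  subst hf
  have perk : ∀ k : Fin (m+3),
      Polynomial.eval (r k) (Hdet (m+3) (∏ i : Fin (m+3), (X - C (r i))))
        = ∏ i : Fin (m+2), ∏ j, if i < j
            then (2 * r k - r (k.succAbove i) - r (k.succAbove j)) else 1 := by
    intro k
    set β : Fin (m+2) → ℂ := fun i => r (k.succAbove i) - r k with hβ
    have htay : Polynomial.taylor (r k) (∏ i : Fin (m+3), (X - C (r i))) = X * bprod β := by
      rw [Polynomial.taylor_apply, Polynomial.prod_comp]
      have h1 : ∀ i : Fin (m+3), (X - C (r i)).comp (X + C (r k)) = X - C (r i - r k) := by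
        intro i
        rw [Polynomial.sub_comp, Polynomial.X_comp, Polynomial.C_comp, map_sub]
        ring
      rw [Finset.prod_congr rfl fun i _ => h1 i,
        Fin.prod_univ_succAbove (fun i => X - C (r i - r k)) k,
        sub_self, map_zero, sub_zero, bprod]
    have hmat : Polynomial.eval (r k) (Hdet (m+3) (∏ i : Fin (m+3), (X - C (r i))))
        = (MM m β).det := by
      rw [Hdet, ← Polynomial.coe_evalRingHom, RingHom.map_det]
      congr 1
      ext p q
      simp only [RingHom.mapMatrix_apply, Matrix.map_apply, Matrix.of_apply,
        Polynomial.coe_evalRingHom, apply_ite (Polynomial.eval (r k)), Polynomial.eval_zero]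
      rw [← Polynomial.taylor_coeff, htay, MM]
      by_cases hc : (p:ℕ) ≤ 2*(q:ℕ)+1
      · rw [if_pos hc, show 2*(q:ℕ)+2-(p:ℕ) = (2*(q:ℕ)+1-(p:ℕ))+1 by omega,
          Polynomial.coeff_X_mul]
        exact (if_pos hc).symm
      · rw [if_neg hc]
        exact (if_neg hc).symm
    rw [hmat, MM_det_eq_TT m β]
    refine Finset.prod_congr rfl fun i _ => Finset.prod_congr rfl fun j _ => ?_
    refine if_congr Iff.rfl ?_ rfl
    rw [hβ]
    ring
  rw [Finset.prod_congr rfl fun k _ => perk k]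
  have hreindex : ∀ k : Fin (m+3),
      (∏ i : Fin (m+3), ∏ j, if i < j ∧ k ≠ i ∧ k ≠ j then 2*r k - r i - r j else 1)
        = ∏ i : Fin (m+2), ∏ j, if i < j
            then 2*r k - r (k.succAbove i) - r (k.succAbove j) else 1 := by
    intro k
    rw [Fin.prod_univ_succAbove
      (fun i => ∏ j, if i < j ∧ k ≠ i ∧ k ≠ j then 2*r k - r i - r j else 1) k]
    have h0 : (∏ j, if k < j ∧ k ≠ k ∧ k ≠ j then 2*r k - r k - r j else 1) = 1 :=
      Finset.prod_eq_one fun j _ => by simp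
    rw [h0, one_mul]
    refine Finset.prod_congr rfl fun i _ => ?_
    rw [Fin.prod_univ_succAbove
      (fun j => if k.succAbove i < j ∧ k ≠ k.succAbove i ∧ k ≠ j
        then 2*r k - r (k.succAbove i) - r j else 1) k]
    rw [if_neg (fun h => h.2.2 rfl), one_mul]
    refine Finset.prod_congr rfl fun j _ => ?_
    refine if_congr ?_ rfl rfl
    constructor
    · intro h
      exact Fin.succAbove_lt_succAbove_iff.mp h.1
    · intro h
      exact ⟨Fin.succAbove_lt_succAbove_iff.mpr h,
        (Fin.succAbove_ne k i).symm, (Fin.succAbove_ne k j).symm⟩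
  calc (∏ k : Fin (m+3), ∏ i : Fin (m+2), ∏ j, if i < j
            then (2 * r k - r (k.succAbove i) - r (k.succAbove j)) else 1)
      = ∏ k : Fin (m+3), ∏ i : Fin (m+3), ∏ j,
          if i < j ∧ k ≠ i ∧ k ≠ j then 2*r k - r i - r j else 1 :=
        Finset.prod_congr rfl fun k _ => (hreindex k).symm
    _ = ∏ i : Fin (m+3), ∏ k : Fin (m+3), ∏ j,
          if i < j ∧ k ≠ i ∧ k ≠ j then 2*r k - r i - r j else 1 := Finset.prod_comm
    _ = ∏ i : Fin (m+3), ∏ j : Fin (m+3), ∏ k,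
          if i < j ∧ k ≠ i ∧ k ≠ j then 2*r k - r i - r j else 1 :=
        Finset.prod_congr rfl fun i _ => Finset.prod_comm
end

section
/- Let f be a monic polynomial of degree n ≥ 3 over ℂ with roots r_1, …, r_n (listed with multiplicity), and let H be the associated determinant polynomial. If for some indices i, j, k with 1 ≤ i < j ≤ n, 1 ≤ k ≤ n, k ≠ i, k ≠ j one has r_k = (r_i + r_j)/2, then H(r_k) = 0. -/
open Polynomial Matrix

section

variable {R : Type*} [CommRing R]

/-- Every `k` decomposes as `e (X²) + X * (oddPart k) (X²)`. -/
noncomputable def Polynomial.oddPart (k : R[X]) : R[X] := contract 2 (divX k)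

theorem Polynomial.coeff_oddPart (k : R[X]) (m : ℕ) :
    (oddPart k).coeff m = k.coeff (2 * m + 1) := by
  rw [oddPart, coeff_contract two_ne_zero, coeff_divX, mul_comm]

theorem Polynomial.oddPart_X_sq_sub_C_mul (u : R) (h : R[X]) :
    oddPart ((X ^ 2 - C u) * h) = (X - C u) * oddPart h := by
  ext (_ | m) <;>
    simp [coeff_oddPart, sub_mul, coeff_X_pow_mul', coeff_X_mul, mul_add]

/-- Row `p`, column `q` holds `k_{2q+1-p}`, read as `0` when `2q+1 < p`. -/
noncomputable def coeffMatrix (d : ℕ) (k : R[X]) : Matrix (Fin d) (Fin d) R :=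
  of fun p q => (X ^ (p : ℕ) * k).coeff (2 * q + 1)

theorem coeffMatrix_mulVec_pow {d : ℕ} {k : R[X]} (hk : k.natDegree ≤ d + 1) (u : R) :
    coeffMatrix d k *ᵥ (fun q => u ^ (q : ℕ)) =
      fun p : Fin d => (oddPart (X ^ (p : ℕ) * k)).eval u := by
  funext p
  have hdeg : (oddPart (X ^ (p : ℕ) * k)).natDegree < d := by
    refine (natDegree_le_iff_coeff_eq_zero.mpr fun m hm => ?_).trans_lt
      (Nat.sub_one_lt_of_lt p.isLt)
    rw [coeff_oddPart]
    have hmul : (X ^ (p : ℕ) * k).natDegree ≤ p + (d + 1) :=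
      natDegree_mul_le.trans (add_le_add (natDegree_X_pow_le _) hk)
    exact coeff_eq_zero_of_natDegree_lt (by omega)
  rw [eval_eq_sum_range' hdeg, ← Fin.sum_univ_eq_sum_range]
  simp only [mulVec, dotProduct, coeffMatrix, of_apply, coeff_oddPart]

theorem X_mul_X_sq_sub_C_dvd_taylor {f : R[X]} {x t : R}
    (h : (X - C (x + t)) * (X - C (x - t)) * (X - C x) ∣ f) :
    X * (X ^ 2 - C (t ^ 2)) ∣ taylor x f := by
  convert map_dvd (taylorAlgHom x) h using 1 <;>
    simp only [map_mul, map_sub, taylorAlgHom_apply, map_add, taylor_X, taylor_C, C_pow]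
  ring

end

theorem Hdet_eval_eq_det_coeffMatrix {R : Type} [CommRing R] (n : ℕ) {f k : R[X]} {x : R}
    (hk : taylor x f = X * k) : (Hdet n f).eval x = (coeffMatrix (n - 2) k).det := by
  rw [Hdet, ← coe_evalRingHom, RingHom.map_det, RingHom.mapMatrix_apply]
  congr 1
  ext p q
  simp only [coeffMatrix, map_apply, of_apply, coe_evalRingHom, coeff_X_pow_mul']
  split_ifs with hpq
  · rw [← taylor_coeff, hk, show 2 * (q : ℕ) + 2 - p = (2 * q + 1 - p) + 1 by omega, coeff_X_mul]
  · exact eval_zero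

theorem Hdet_eval_eq_zero_of_X_mul_dvd_taylor {R : Type} [CommRing R] {n : ℕ} (hn : 3 ≤ n)
    {f : R[X]} (hf : f.natDegree ≤ n) {x u : R} (hdvd : X * (X ^ 2 - C u) ∣ taylor x f) :
    (Hdet n f).eval x = 0 := by
  obtain ⟨h, hh⟩ := hdvd
  have hXk : taylor x f = X * ((X ^ 2 - C u) * h) := by rw [hh, mul_assoc]
  have hk : ((X ^ 2 - C u) * h).natDegree ≤ n - 2 + 1 :=
    natDegree_le_iff_coeff_eq_zero.mpr fun m hm => by
      rw [← coeff_X_mul, ← hXk]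
      exact coeff_eq_zero_of_natDegree_lt (by rw [natDegree_taylor]; omega)
  rw [Hdet_eval_eq_det_coeffMatrix n hXk]
  refine det_eq_zero_of_mulVec_eq_zero_of_mem_nonZeroDivisors (i := ⟨0, by omega⟩)
    (v := fun q => u ^ (q : ℕ)) ?_ (by simp [one_mem])
  rw [coeffMatrix_mulVec_pow hk u]
  funext p
  dsimp only [Pi.zero_apply]
  rw [mul_left_comm, oddPart_X_sq_sub_C_mul, eval_mul, eval_sub, eval_X, eval_C, sub_self,
    zero_mul]

/-- For a monic polynomial `f` of degree `n ≥ 3` over `ℂ` with roots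
`r 0, …, r (n-1)` (with multiplicity): if `r k = (r i + r j)/2` for some indices
`i < j`, `k ≠ i`, `k ≠ j`, then `H(r k) = 0`. -/
theorem Hdet_eval_eq_zero_of_symmetric_triple
    (n : ℕ) (hn : 3 ≤ n) (r : Fin n → ℂ) (f : Polynomial ℂ)
    (hf : f = ∏ i : Fin n, (Polynomial.X - Polynomial.C (r i)))
    (i j k : Fin n) (hij : i < j) (hki : k ≠ i) (hkj : k ≠ j)
    (havg : r k = (r i + r j) / 2) :
    (Hdet n f).eval (r k) = 0 := by
  have hdeg : f.natDegree ≤ n := by simp [hf]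
  have hrj : r j = r k - (r i - r k) := by rw [havg]; ring
  have hdvd : (X - C (r k + (r i - r k))) * (X - C (r k - (r i - r k))) * (X - C (r k)) ∣ f := by
    rw [add_sub_cancel, ← hrj, hf, mul_assoc]
    convert Finset.prod_dvd_prod_of_subset {i, j, k} Finset.univ (fun l => X - C (r l))
      (Finset.subset_univ _)
    rw [Finset.prod_insert (by simp [hij.ne, hki.symm]), Finset.prod_insert (by simp [hkj.symm]),
      Finset.prod_singleton]
  exact Hdet_eval_eq_zero_of_X_mul_dvd_taylor hn hdeg (X_mul_X_sq_sub_C_dvd_taylor hdvd)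
end

section
/- Let r_1, …, r_n (n ≥ 3) be indeterminates over ℚ, let f = ∏_{i=1}^n (x − r_i) be the corresponding monic polynomial in x over the multivariate polynomial ring ℚ[r_1, …, r_n], and let H be the associated determinant polynomial in x. Then for every triple of indices (i, k, j) with 1 ≤ i < j ≤ n, 1 ≤ k ≤ n, k ≠ i, k ≠ j, the linear polynomial 2r_k − r_i − r_j divides the evaluation H(r_k) in the ring ℚ[r_1, …, r_n]. -/
open Polynomial in
/-- Core vanishing: a Hurwitz-type determinant of a polynomial of the form
`X * ((X - C u) * (X + C u) * h)` vanishes, via the kernel vector `q ↦ u^(2q)`. -/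
lemma detA {R : Type} [CommRing R] (N : ℕ) (hN : 0 < N) (u : R) (h : R[X])
    (hh : h.natDegree < N) :
    (Matrix.of fun p q : Fin N =>
      if (p : ℕ) ≤ 2 * (q : ℕ) + 1 then
        (X * ((X - C u) * (X + C u) * h)).coeff (2 * (q : ℕ) + 2 - (p : ℕ))
      else 0).det = 0 := by
  set g : R[X] := (X - C u) * (X + C u) * h with hgdef
  have hg : ∀ r : ℕ, g.coeff r = (if 2 ≤ r then h.coeff (r - 2) else 0) - u ^ 2 * h.coeff r := by
    intro r
    have : g = h * X ^ 2 - C (u ^ 2) * h := by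
      rw [hgdef]; ring_nf; rw [C_pow]; ring
    rw [this, Polynomial.coeff_sub, Polynomial.coeff_mul_X_pow', Polynomial.coeff_C_mul]
  set M : Matrix (Fin N) (Fin N) R := Matrix.of fun p q : Fin N =>
      if (p : ℕ) ≤ 2 * (q : ℕ) + 1 then
        (X * g).coeff (2 * (q : ℕ) + 2 - (p : ℕ))
      else 0 with hM
  set v : Fin N → R := fun q => u ^ (2 * (q : ℕ)) with hv
  have key : M.mulVec v = 0 := by
    funext p
    show ∑ q : Fin N, M p q * v q = 0
    set A : ℕ → R := fun m => if (p : ℕ) + 1 ≤ 2 * m then u ^ (2 * m) * h.coeff (2 * m - 1 - p) else 0 with hA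
    have hterm : ∀ q : Fin N, M p q * v q = A q - A ((q : ℕ) + 1) := by
      intro q
      by_cases hpq : (p : ℕ) ≤ 2 * (q : ℕ) + 1
      · have e1 : 2 * (q : ℕ) + 2 - (p : ℕ) = (2 * (q : ℕ) + 1 - (p : ℕ)) + 1 := by omega
        have e2 : (X * g).coeff (2 * (q : ℕ) + 2 - (p : ℕ)) = g.coeff (2 * (q : ℕ) + 1 - (p : ℕ)) := by
          rw [e1, Polynomial.coeff_X_mul]
        rw [hM]
        simp only [Matrix.of_apply, if_pos hpq, e2, hg, hv, hA]
        by_cases hc : (p : ℕ) + 1 ≤ 2 * (q : ℕ)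
        · have c1 : 2 ≤ 2 * (q : ℕ) + 1 - (p : ℕ) := by omega
          have c2 : 2 * (q : ℕ) + 1 - (p : ℕ) - 2 = 2 * (q : ℕ) - 1 - (p : ℕ) := by omega
          have c3 : (p : ℕ) + 1 ≤ 2 * ((q : ℕ) + 1) := by omega
          have c4 : 2 * ((q : ℕ) + 1) - 1 - (p : ℕ) = 2 * (q : ℕ) + 1 - (p : ℕ) := by omega
          rw [if_pos c1, if_pos hc, if_pos c3, c2, c4]
          ring_nf
        · have c1 : ¬ (2 ≤ 2 * (q : ℕ) + 1 - (p : ℕ)) := by omega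
          have c3 : (p : ℕ) + 1 ≤ 2 * ((q : ℕ) + 1) := by omega
          have c4 : 2 * ((q : ℕ) + 1) - 1 - (p : ℕ) = 2 * (q : ℕ) + 1 - (p : ℕ) := by omega
          rw [if_neg c1, if_neg hc, if_pos c3, c4]
          ring_nf
      · have c1 : ¬ ((p : ℕ) + 1 ≤ 2 * (q : ℕ)) := by omega
        have c2 : ¬ ((p : ℕ) + 1 ≤ 2 * ((q : ℕ) + 1)) := by omega
        rw [hM]
        simp only [Matrix.of_apply, if_neg hpq, hA, if_neg c1, if_neg c2, zero_mul, sub_zero]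
    calc ∑ q : Fin N, M p q * v q
        = ∑ q : Fin N, (A (q : ℕ) - A ((q : ℕ) + 1)) :=
          Finset.sum_congr rfl (fun q _ => hterm q)
      _ = ∑ q ∈ Finset.range N, (A q - A (q + 1)) :=
          Fin.sum_univ_eq_sum_range (fun q => A q - A (q + 1)) N
      _ = A 0 - A N := Finset.sum_range_sub' A N
      _ = 0 := by
          have h0 : A 0 = 0 := by simp [hA]
          have hNz : A N = 0 := by
            rw [hA]
            by_cases hc : (p : ℕ) + 1 ≤ 2 * N
            · have : h.natDegree < 2 * N - 1 - (p : ℕ) := by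
                have := p.isLt; omega
              simp only [if_pos hc, Polynomial.coeff_eq_zero_of_natDegree_lt this, mul_zero]
            · simp [hc]
          rw [h0, hNz, sub_zero]
  have h2 : M.adjugate.mulVec (M.mulVec v) = 0 := by rw [key, Matrix.mulVec_zero]
  rw [Matrix.mulVec_mulVec, Matrix.adjugate_mul, Matrix.smul_mulVec, Matrix.one_mulVec] at h2
  have h3 := congrFun h2 ⟨0, hN⟩
  simpa [hv] using h3

open Polynomial in
lemma hasseDeriv_map' {R S : Type} [CommRing R] [CommRing S] (φ : R →+* S) (m : ℕ) (f : R[X]) :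
    (Polynomial.hasseDeriv m f).map φ = Polynomial.hasseDeriv m (f.map φ) := by
  ext d
  simp only [Polynomial.coeff_map, Polynomial.hasseDeriv_coeff, map_mul, map_natCast]

open Polynomial in
/-- The evaluation of `Hdet` at a "midpoint root" vanishes. -/
lemma evalHdet {R : Type} [CommRing R] (n : ℕ) (hn : 3 ≤ n) (s : Fin n → R)
    (i j k : Fin n) (hij : i ≠ j) (hki : k ≠ i) (hkj : k ≠ j)
    (hs : s i + s j = 2 * s k) :
    Polynomial.eval (s k) (Hdet n (∏ l : Fin n, (X - C (s l)))) = 0 := by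
  classical
  set u : R := s i - s k with hu
  set T : Finset (Fin n) := ((Finset.univ.erase k).erase i).erase j with hT
  set h : R[X] := ∏ l ∈ T, (X - C (s l - s k)) with hh
  have hi1 : i ∈ Finset.univ.erase k := Finset.mem_erase.2 ⟨Ne.symm hki, Finset.mem_univ i⟩
  have hj1 : j ∈ (Finset.univ.erase k).erase i :=
    Finset.mem_erase.2 ⟨Ne.symm hij, Finset.mem_erase.2 ⟨Ne.symm hkj, Finset.mem_univ j⟩⟩
  -- taylor expansion of f at s k
  have htaylor : taylor (s k) (∏ l : Fin n, (X - C (s l)))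
      = X * ((X - C u) * (X + C u) * h) := by
    rw [taylor_apply, prod_comp]
    have step : ∀ l : Fin n, (X - C (s l)).comp (X + C (s k)) = X - C (s l - s k) := by
      intro l; simp [sub_comp, X_comp, C_comp, C_sub]; ring
    rw [Finset.prod_congr rfl (fun l _ => step l)]
    have hk1 : k ∈ (Finset.univ : Finset (Fin n)) := Finset.mem_univ k
    rw [← Finset.mul_prod_erase _ _ hk1, ← Finset.mul_prod_erase _ _ hi1,
        ← Finset.mul_prod_erase _ _ hj1, ← hT, ← hh]
    have ek : X - C (s k - s k) = (X : R[X]) := by simp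
    have ej : X - C (s j - s k) = X + C u := by
      rw [hu]
      have : s j - s k = -(s i - s k) := by linear_combination hs
      rw [this, map_neg, sub_neg_eq_add]
    rw [ek, ej, hu]
    ring
  have hdeg : h.natDegree < n - 2 := by
    have h1 : h.natDegree ≤ ∑ l ∈ T, (X - C (s l - s k)).natDegree := natDegree_prod_le T _
    have h2 : ∑ l ∈ T, (X - C (s l - s k)).natDegree ≤ ∑ l ∈ T, 1 :=
      Finset.sum_le_sum (fun l _ => natDegree_X_sub_C_le _)
    rw [Finset.sum_const, smul_eq_mul, mul_one] at h2
    have hcard : T.card = n - 3 := by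
      rw [hT, Finset.card_erase_of_mem hj1, Finset.card_erase_of_mem hi1,
        Finset.card_erase_of_mem (Finset.mem_univ k), Finset.card_univ, Fintype.card_fin]
      omega
    omega
  -- push eval into the determinant
  have hmapdet := RingHom.map_det (Polynomial.evalRingHom (s k))
    (Matrix.of fun p q : Fin (n - 2) =>
      if (p : ℕ) ≤ 2 * (q : ℕ) + 1 then
        Polynomial.hasseDeriv (2 * (q : ℕ) + 2 - (p : ℕ)) (∏ l : Fin n, (X - C (s l)))
      else 0)
  rw [Hdet]
  show Polynomial.evalRingHom (s k) _ = 0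
  rw [hmapdet]
  have hent : (Polynomial.evalRingHom (s k)).mapMatrix
      (Matrix.of fun p q : Fin (n - 2) =>
        if (p : ℕ) ≤ 2 * (q : ℕ) + 1 then
          Polynomial.hasseDeriv (2 * (q : ℕ) + 2 - (p : ℕ)) (∏ l : Fin n, (X - C (s l)))
        else 0)
      = Matrix.of fun p q : Fin (n - 2) =>
          if (p : ℕ) ≤ 2 * (q : ℕ) + 1 then
            (X * ((X - C u) * (X + C u) * h)).coeff (2 * (q : ℕ) + 2 - (p : ℕ))
          else 0 := by
    ext p q
    simp only [RingHom.mapMatrix_apply, Matrix.map_apply, Matrix.of_apply, apply_ite,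
      coe_evalRingHom, map_zero]
    rw [← taylor_coeff, htaylor]
    split <;> simp
  rw [hent]
  exact detA (n - 2) (by omega) u h hdeg

open MvPolynomial in
/-- The substitution `X k ↦ (X i + X j)/2` changes any polynomial by a multiple of
`2 X k - X i - X j`. -/
lemma sub_aeval_dvd (n : ℕ) (i j k : Fin n)
    (P : MvPolynomial (Fin n) ℚ) :
    (2 * X k - X i - X j) ∣
      (P - MvPolynomial.aeval
        (Function.update MvPolynomial.X k (C (1/2 : ℚ) * (X i + X j))) P) := by
  classical
  set g : Fin n → MvPolynomial (Fin n) ℚ :=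
    Function.update MvPolynomial.X k (C (1/2 : ℚ) * (X i + X j)) with hg
  set σ := MvPolynomial.aeval (R := ℚ) g with hσ
  set L : MvPolynomial (Fin n) ℚ := 2 * X k - X i - X j with hL
  have hLk : L ∣ (X k - g k) := by
    refine ⟨C (1/2 : ℚ), ?_⟩
    rw [hL, hg, Function.update_self]
    have h2 : (2 : MvPolynomial (Fin n) ℚ) * C (1/2 : ℚ) = 1 := by
      rw [(map_ofNat MvPolynomial.C 2).symm, ← C_mul]; norm_num
    linear_combination (-(X k)) * h2
  induction P using MvPolynomial.induction_on with
  | C a => simp [hσ]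
  | add p q hp hq =>
      have : p + q - σ (p + q) = (p - σ p) + (q - σ q) := by rw [map_add]; ring
      rw [this]; exact dvd_add hp hq
  | mul_X p m hp =>
      have : p * X m - σ (p * X m) = (p - σ p) * X m + σ p * (X m - g m) := by
        rw [map_mul, hσ, MvPolynomial.aeval_X]; ring
      rw [this]
      refine dvd_add (Dvd.dvd.mul_right hp _) ?_
      by_cases hm : m = k
      · subst hm; exact Dvd.dvd.mul_left hLk _
      · rw [hg, Function.update_of_ne hm]; simp

/-- Let `r 0, …, r (n-1)` (`n ≥ 3`) be indeterminates over `ℚ`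
(the variables of `MvPolynomial (Fin n) ℚ`), let `f = ∏ᵢ (x - rᵢ)` and let `H` be the
associated determinant polynomial in `x`. Then for every triple `i < j`, `k ≠ i`,
`k ≠ j`, the linear polynomial `2 rₖ - rᵢ - rⱼ` divides `H(rₖ)` in `ℚ[r 0, …, r (n-1)]`. -/
theorem linear_form_dvd_Hdet_eval
    (n : ℕ) (hn : 3 ≤ n)
    (f : Polynomial (MvPolynomial (Fin n) ℚ))
    (hf : f = ∏ i : Fin n, (Polynomial.X - Polynomial.C (MvPolynomial.X i)))
    (i j k : Fin n) (hij : i < j) (hki : k ≠ i) (hkj : k ≠ j) :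
    (2 * MvPolynomial.X k - MvPolynomial.X i - MvPolynomial.X j) ∣
      Polynomial.eval (MvPolynomial.X k) (Hdet n f) := by
  classical
  set R := MvPolynomial (Fin n) ℚ
  set g : Fin n → R :=
    Function.update MvPolynomial.X k (MvPolynomial.C (1/2 : ℚ) * (MvPolynomial.X i + MvPolynomial.X j)) with hg
  set σ : R →+* R := (MvPolynomial.aeval (R := ℚ) g).toRingHom with hσ
  set P : R := Polynomial.eval (MvPolynomial.X k) (Hdet n f) with hP
  have hzero : σ P = 0 := by
    -- push σ through eval
    have e1 : σ P = Polynomial.eval (σ (MvPolynomial.X k)) ((Hdet n f).map σ) := by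
      rw [hP]
      rw [← Polynomial.eval₂_eq_eval_map]
      rw [show Polynomial.eval (MvPolynomial.X k) (Hdet n f)
          = Polynomial.eval₂ (RingHom.id R) (MvPolynomial.X k) (Hdet n f) from rfl]
      rw [Polynomial.hom_eval₂]
      rw [RingHom.comp_id]
    -- map σ through Hdet
    have e2 : (Hdet n f).map σ = Hdet n (f.map σ) := by
      rw [Hdet, Hdet]
      have := RingHom.map_det (Polynomial.mapRingHom σ)
        (Matrix.of fun p q : Fin (n - 2) =>
          if (p : ℕ) ≤ 2 * (q : ℕ) + 1 then
            Polynomial.hasseDeriv (2 * (q : ℕ) + 2 - (p : ℕ)) f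
          else 0)
      rw [show ((Matrix.of fun p q : Fin (n - 2) =>
          if (p : ℕ) ≤ 2 * (q : ℕ) + 1 then
            Polynomial.hasseDeriv (2 * (q : ℕ) + 2 - (p : ℕ)) f else 0).det).map σ
          = Polynomial.mapRingHom σ ((Matrix.of fun p q : Fin (n - 2) =>
          if (p : ℕ) ≤ 2 * (q : ℕ) + 1 then
            Polynomial.hasseDeriv (2 * (q : ℕ) + 2 - (p : ℕ)) f else 0).det) from rfl, this]
      congr 1
      ext p q
      simp only [RingHom.mapMatrix_apply, Matrix.map_apply, Matrix.of_apply, apply_ite,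
        Polynomial.coe_mapRingHom, Polynomial.map_zero]
      rw [hasseDeriv_map']
    -- f.map σ is the product with the substituted roots
    have e3 : f.map σ = ∏ l : Fin n, (Polynomial.X - Polynomial.C (g l)) := by
      rw [hf, Polynomial.map_prod]
      refine Finset.prod_congr rfl (fun l _ => ?_)
      rw [Polynomial.map_sub, Polynomial.map_X, Polynomial.map_C]
      have : σ (MvPolynomial.X l) = g l := MvPolynomial.aeval_X (R := ℚ) g l
      rw [this]
    rw [e1, e2, e3]
    have hsk : σ (MvPolynomial.X k) = g k := MvPolynomial.aeval_X (R := ℚ) g k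
    rw [hsk]
    refine evalHdet n hn g i j k (Fin.ne_of_lt hij) hki hkj ?_
    have hgi : g i = MvPolynomial.X i := Function.update_of_ne (Ne.symm hki) _ _
    have hgj : g j = MvPolynomial.X j := Function.update_of_ne (Ne.symm hkj) _ _
    have hgk : g k = MvPolynomial.C (1/2 : ℚ) * (MvPolynomial.X i + MvPolynomial.X j) :=
      Function.update_self _ _ _
    rw [hgi, hgj, hgk]
    have h2 : (2 : R) * MvPolynomial.C (1/2 : ℚ) = 1 := by
      rw [(map_ofNat MvPolynomial.C 2).symm, ← MvPolynomial.C_mul]; norm_num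
    linear_combination (-(MvPolynomial.X i + MvPolynomial.X j)) * h2
  have hdvd := sub_aeval_dvd n i j k P
  rw [show MvPolynomial.aeval
      (Function.update MvPolynomial.X k
        (MvPolynomial.C (1/2 : ℚ) * (MvPolynomial.X i + MvPolynomial.X j))) P = σ P from rfl,
    hzero, sub_zero] at hdvd
  exact hdvd
end

section
/- Let n ≥ 3 and let r be a complex number. The determinant of the (n−2)×(n−2) matrix whose (p, q) entry (1 ≤ p, q ≤ n−2) equals C(n−1, n−2q+p−1)·r^{n−2q+p−1} when n−2q+p−1 ≥ 0 (with the binomial coefficient C(n−1, m) equal to 0 when m > n−1) and equals 0 when n−2q+p−1 < 0, is equal to (2r)^{(n−1)(n−2)/2}. -/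
/-!
Write `f = (X + r)^(m+1)`; the matrix reads the odd coefficients `X^(2q+1)` of the polynomials
`X^p f`, `p < m`. Add the even polynomials `(X² - r²)^j`, `j ≤ m`: the coefficient matrix of these
`2m+1` polynomials of degree `≤ 2m` is block triangular for the order "even exponents, then odd
ones", with a unitriangular even block, so it has the same determinant. In the Taylor basis
`(X + r)^k` the same polynomials become `X^j (X - 2r)^j` and `(X - r)^p X^(m+1)`, which is block
triangular for the order "`k ≤ m`, then `k > m`", with diagonal blocks of determinants
`(-2r)^(m(m+1)/2)` and `1`. The change of basis is unitriangular once both sides are ordered by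
exponent, so it only contributes the sign `(-1)^(m(m+1)/2)` of the shuffle between the two orders.
-/

open Polynomial Matrix

variable {R : Type*} [CommRing R]

theorem coeff_eq_sum_coeff_taylor_neg_mul {h : R[X]} {d : ℕ} (hd : h.natDegree < d) (r : R)
    (b : ℕ) :
    h.coeff b = ∑ a ∈ Finset.range d, (taylor (-r) h).coeff a * ((X + C r) ^ a).coeff b := by
  conv_lhs => rw [← sum_taylor_eq h (-r)]
  rw [sum_over_range' _ (fun _ => by simp) d (by rwa [natDegree_taylor]), finsetSum_coeff]
  simp [coeff_C_mul]

theorem coeff_X_pow_mul_X_add_C_pow (N p k : ℕ) (r : R) :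
    (X ^ p * (X + C r) ^ N).coeff k =
      if k ≤ N + p then (N.choose (N + p - k) : R) * r ^ (N + p - k) else 0 := by
  rw [coeff_X_pow_mul', coeff_X_add_C_pow]
  split_ifs with h₁ h₂ h₂
  · rw [mul_comm, ← Nat.choose_symm (by omega), show N - (k - p) = N + p - k by omega]
  · rw [Nat.choose_eq_zero_of_lt (by omega), Nat.cast_zero, mul_zero]
  · rw [Nat.choose_eq_zero_of_lt (by omega), Nat.cast_zero, zero_mul]
  · rfl

theorem coeff_matrix_eq_taylor_mul {ι κ ν : Type*} [Fintype κ] {d : ℕ} (v : ι → R[X])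
    (hv : ∀ i, (v i).natDegree < d) (e : κ ≃ Fin d) (r : R) (exps : ν → ℕ) :
    (of fun i c => (v i).coeff (exps c)) =
      (of fun i k => (taylor (-r) (v i)).coeff (e k)) *
        of fun k c => ((X + C r) ^ (e k : ℕ)).coeff (exps c) := by
  ext i c
  simp only [mul_apply, of_apply]
  rw [coeff_eq_sum_coeff_taylor_neg_mul (hv i) r, ← Fin.sum_univ_eq_sum_range, ← e.sum_comp]

theorem det_coeff_X_add_C_pow (n : ℕ) (a : R) :
    (of fun i j : Fin n => ((X + C a) ^ (i : ℕ)).coeff j).det = 1 := by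
  rw [det_of_isLowerTriangular]
  · simp [coeff_X_add_C_pow]
  · intro i j hij
    simp [coeff_X_add_C_pow, Nat.choose_eq_zero_of_lt (show (i : ℕ) < j from hij)]

theorem det_coeff_X_pow_mul_X_add_C_pow (n : ℕ) (a : R) :
    (of fun i j : Fin n => (X ^ (i : ℕ) * (X + C a) ^ (i : ℕ)).coeff j).det =
      a ^ (n * (n - 1) / 2) := by
  rw [det_of_isUpperTriangular]
  · simp [coeff_X_pow_mul', coeff_X_add_C_pow, Finset.prod_pow_eq_pow_sum,
      Fin.sum_univ_eq_sum_range (fun i => i), Finset.sum_range_id]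
  · intro i j hij
    have hji : j < i := hij
    simp [coeff_X_pow_mul', not_le.2 hji]

theorem det_coeff_X_add_C_pow_equiv {ι : Type*} [Fintype ι] [DecidableEq ι] {d : ℕ}
    (e₁ e₂ : ι ≃ Fin d) (a : R) :
    (of fun i j => ((X + C a) ^ (e₁ i : ℕ)).coeff (e₂ j)).det =
      ((Equiv.Perm.sign (e₁.symm.trans e₂) : ℤ) : R) := by
  have h : (of fun i j => ((X + C a) ^ (e₁ i : ℕ)).coeff (e₂ j)) =
      ((of fun i j : Fin d => ((X + C a) ^ (i : ℕ)).coeff j).submatrix id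
        (e₁.symm.trans e₂)).submatrix e₁ e₁ := by
    ext i j
    simp
  rw [h, det_submatrix_equiv_self, det_permute', det_coeff_X_add_C_pow, mul_one]

theorem sign_eq_prod_range_prod_range {N : ℕ} (σ : Equiv.Perm (Fin N)) {s : ℕ → ℕ}
    (hs : ∀ i, (σ i : ℕ) = s i) :
    Equiv.Perm.sign σ =
      ∏ j ∈ Finset.range N, ∏ i ∈ Finset.range j, if s i < s j then 1 else -1 := by
  rw [Equiv.Perm.sign_eq_prod_prod_Iio, ← Fin.prod_univ_eq_prod_range]
  refine Finset.prod_congr rfl fun j _ => ?_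
  rw [← Nat.Iio_eq_range, ← Fin.map_valEmbedding_Iio, Finset.prod_map]
  simp [Fin.lt_def, hs]

noncomputable def evenOddEquiv (m : ℕ) : Fin (m + 1) ⊕ Fin m ≃ Fin (m + 1 + m) :=
  Equiv.ofBijective (Sum.elim (fun j => ⟨2 * j, by omega⟩) fun q => ⟨2 * q + 1, by omega⟩) <| by
    refine (Fintype.bijective_iff_injective_and_card _).2 ⟨?_, by simp⟩
    rintro (i | i) (j | j) h <;> simp [Fin.ext_iff] at h ⊢ <;> omega

@[simp] theorem evenOddEquiv_inl (m : ℕ) (j : Fin (m + 1)) :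
    (evenOddEquiv m (.inl j) : ℕ) = 2 * j := rfl

@[simp] theorem evenOddEquiv_inr (m : ℕ) (q : Fin m) :
    (evenOddEquiv m (.inr q) : ℕ) = 2 * q + 1 := rfl

theorem sign_evenOddEquiv (m : ℕ) :
    Equiv.Perm.sign (finSumFinEquiv.symm.trans (evenOddEquiv m)) = (-1) ^ ((m + 1) * m / 2) := by
  set s : ℕ → ℕ := fun i => if i < m + 1 then 2 * i else 2 * (i - (m + 1)) + 1
  have hs : ∀ i, (finSumFinEquiv.symm.trans (evenOddEquiv m) i : ℕ) = s i := by
    intro i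
    refine Fin.addCases (fun j => ?_) (fun q => ?_) i <;> simp [s] <;> omega
  have hevens : ∀ j ∈ Finset.range (m + 1),
      ∏ i ∈ Finset.range j, (if s i < s j then (1 : ℤˣ) else -1) = 1 := by
    intro j hj
    refine Finset.prod_eq_one fun i hi => if_pos ?_
    simp only [Finset.mem_range, s] at hi hj ⊢
    split_ifs <;> omega
  -- the inversions at `2q + 1` are the `m - q` even exponents `2i > 2q + 1`, all placed before it
  have hodds : ∀ q ∈ Finset.range m, ∏ i ∈ Finset.range (m + 1 + q),
      (if s i < s (m + 1 + q) then (1 : ℤˣ) else -1) = (-1) ^ (m - q) := by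
    intro q hq
    rw [Finset.mem_range] at hq
    rw [show m + 1 + q = (q + 1) + (m - q) + q by omega, Finset.prod_range_add,
      Finset.prod_range_add, Finset.prod_eq_one (fun i hi => if_pos ?_), one_mul,
      Finset.prod_congr rfl (fun i hi => if_neg ?_), Finset.prod_const, Finset.card_range,
      Finset.prod_eq_one (fun i hi => if_pos ?_), mul_one]
    all_goals simp only [Finset.mem_range, s] at hi ⊢; split_ifs <;> omega
  have hsum : ∑ q ∈ Finset.range m, (m - q) = (m + 1) * m / 2 := by
    rw [← Finset.sum_range_reflect, Finset.sum_congr rfl fun q hq =>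
      show m - (m - 1 - q) = q + 1 by simp at hq; omega]
    have h := Finset.sum_range_succ' (fun i => i) m
    rw [Finset.sum_range_id, add_zero] at h
    rw [← h, Nat.add_sub_cancel]
  rw [sign_eq_prod_range_prod_range _ hs, Finset.prod_range_add, Finset.prod_eq_one hevens,
    one_mul, Finset.prod_congr rfl hodds, Finset.prod_pow_eq_pow_sum, hsum]

noncomputable def borderedRows (r : R) (m : ℕ) : Fin (m + 1) ⊕ Fin m → R[X] :=
  Sum.elim (fun j => ((X - C r) * (X + C r)) ^ (j : ℕ)) fun p => X ^ (p : ℕ) * (X + C r) ^ (m + 1)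

theorem natDegree_borderedRows_lt (r : R) (m : ℕ) (i : Fin (m + 1) ⊕ Fin m) :
    (borderedRows r m i).natDegree < m + 1 + m := by
  rcases i with j | p
  · have : (((X - C r) * (X + C r)) ^ (j : ℕ)).natDegree ≤ 2 * (j : ℕ) := by
      compute_degree
      omega
    exact this.trans_lt (by omega)
  · have : (X ^ (p : ℕ) * (X + C r) ^ (m + 1)).natDegree ≤ p + (m + 1) := by compute_degree
    exact this.trans_lt (by omega)

theorem det_coeff_borderedRows_evenOdd (r : R) (m : ℕ) :
    (of fun i c => (borderedRows r m i).coeff (evenOddEquiv m c)).det =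
      (of fun p q : Fin m => (X ^ (p : ℕ) * (X + C r) ^ (m + 1)).coeff (2 * q + 1)).det := by
  have hexpand (j : ℕ) : ((X - C r) * (X + C r)) ^ j = expand R 2 ((X + C (-r ^ 2)) ^ j) := by
    rw [map_pow]
    congr 1
    simp [map_neg]
    ring
  have hblocks : (of fun i c => (borderedRows r m i).coeff (evenOddEquiv m c)) =
      fromBlocks (of fun j j' : Fin (m + 1) => ((X + C (-r ^ 2)) ^ (j : ℕ)).coeff j') 0
        (of fun p j' => (X ^ (p : ℕ) * (X + C r) ^ (m + 1)).coeff (2 * j'))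
        (of fun p q : Fin m => (X ^ (p : ℕ) * (X + C r) ^ (m + 1)).coeff (2 * q + 1)) := by
    ext (j | p) (j' | q)
    · simp only [borderedRows, of_apply, fromBlocks_apply₁₁, Sum.elim_inl, evenOddEquiv_inl,
        hexpand]
      rw [coeff_expand_mul' two_pos]
    · simp only [borderedRows, of_apply, fromBlocks_apply₁₂, Sum.elim_inl, evenOddEquiv_inr,
        hexpand]
      rw [coeff_expand two_pos, if_neg (by omega), Matrix.zero_apply]
    · simp [borderedRows]
    · simp [borderedRows]
  rw [hblocks, det_fromBlocks_zero₁₂, det_coeff_X_add_C_pow, one_mul]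

theorem det_coeff_taylor_borderedRows (r : R) (m : ℕ) :
    (of fun i k => (taylor (-r) (borderedRows r m i)).coeff (finSumFinEquiv k)).det =
      (-2 * r) ^ ((m + 1) * m / 2) := by
  have hplus : taylor (-r) (X + C r) = X := by simp [taylor_X]
  have hminus : taylor (-r) (X - C r) = X + C (-2 * r) := by
    rw [map_sub, taylor_X, taylor_C, neg_mul, map_neg, map_neg, map_mul, C_ofNat]
    ring
  have hblocks : (of fun i k => (taylor (-r) (borderedRows r m i)).coeff (finSumFinEquiv k)) =
      fromBlocks (of fun j k : Fin (m + 1) => (X ^ (j : ℕ) * (X + C (-2 * r)) ^ (j : ℕ)).coeff k)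
        (of fun j (p : Fin m) => (taylor (-r) (borderedRows r m (.inl j))).coeff (m + 1 + p)) 0
        (of fun p p' : Fin m => ((X + C (-r)) ^ (p : ℕ)).coeff p') := by
    ext (j | p) (k | p')
    · simp [borderedRows, taylor_mul, taylor_pow, hplus, hminus, mul_pow, mul_comm]
    · simp
    · simp [borderedRows, taylor_mul, taylor_pow, hplus, coeff_mul_X_pow']
      omega
    · simp [borderedRows, taylor_mul, taylor_pow, hplus, coeff_mul_X_pow']
  rw [hblocks, det_fromBlocks_zero₂₁, det_coeff_X_pow_mul_X_add_C_pow, det_coeff_X_add_C_pow,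
    mul_one, Nat.add_sub_cancel]

theorem det_coeff_X_pow_mul_X_add_C_pow_odd (m : ℕ) (r : R) :
    (of fun p q : Fin m => (X ^ (p : ℕ) * (X + C r) ^ (m + 1)).coeff (2 * q + 1)).det =
      (2 * r) ^ ((m + 1) * m / 2) := by
  rw [← det_coeff_borderedRows_evenOdd,
    coeff_matrix_eq_taylor_mul _ (natDegree_borderedRows_lt r m) finSumFinEquiv r, det_mul,
    det_coeff_taylor_borderedRows, det_coeff_X_add_C_pow_equiv, sign_evenOddEquiv]
  push_cast
  rw [← mul_pow]
  ring

-- `p q` are 0-indexed, so the paper's exponent `n - 2q + p - 1` appears as `n + p - (2q + 2)`.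
/-- For `n ≥ 3` and `r : ℂ`, the determinant of the
`(n-2) × (n-2)` matrix whose entry in (1-indexed) row `p`, column `q` is
`C(n-1, n-2q+p-1) * r^(n-2q+p-1)` when `n - 2q + p - 1 ≥ 0` and `0` otherwise
(with `C(n-1, m) = 0` for `m > n-1`), equals `(2r)^((n-1)(n-2)/2)`.
(Below `p q : Fin (n-2)` are 0-indexed, so the exponent is `n + p - 2q - 2`.) -/
theorem det_binomial_matrix_eq_two_mul_pow
    (n : ℕ) (hn : 3 ≤ n) (r : ℂ) :
    Matrix.det (Matrix.of fun p q : Fin (n - 2) =>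
        if 2 * (q : ℕ) + 2 ≤ n + (p : ℕ) then
          (Nat.choose (n - 1) (n + (p : ℕ) - (2 * (q : ℕ) + 2)) : ℂ) *
            r ^ (n + (p : ℕ) - (2 * (q : ℕ) + 2))
        else 0) =
      (2 * r) ^ ((n - 1) * (n - 2) / 2) := by
  obtain ⟨m, rfl⟩ : ∃ m, n = m + 2 := ⟨n - 2, by omega⟩
  show det (of fun p q : Fin m => _) = (2 * r) ^ ((m + 1) * m / 2)
  rw [← det_coeff_X_pow_mul_X_add_C_pow_odd]
  congr 1
  ext p q
  rw [of_apply, of_apply, coeff_X_pow_mul_X_add_C_pow]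
  split_ifs with h₁ h₂ h₂
  · rw [show m + 1 + (p : ℕ) - (2 * q + 1) = m + 2 + p - (2 * q + 2) by omega]
    rfl
  · omega
  · omega
  · rfl
end

section
/- Let f be a monic polynomial of degree n ≥ 3 over ℂ with roots r_1, …, r_n (listed with multiplicity). Then Res_x(f, Res_y(f_1, f_2)) = 0 if and only if D_1·D_2 = 0, where D_1 and D_2 are the first and second discriminants of f. -/
/-!
Write `ρ(x) = Res_y(f₁, f₂)`. Since `f = ∏ (X - r i)` is monic and split,
`Res_x(f, ρ) = ∏ ρ(r i)`, so it vanishes iff `ρ(r i) = 0` for some `i`. Evaluating `x := r i` commutes with the resultant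
because `f₁` is monic in `y`, and specializes the defining identities to
`f₁(r i, y) = ∏_{j ≠ i} (y - r j)` and `f₂(r i, y) = ∏_{k ≠ i} ((r i + y)/2 - r k)`.
Hence `ρ(r i) = ∏_{j ≠ i} f₂(r i, r j)` vanishes iff `r i + r j = 2 r k` for some `j ≠ i`, `k ≠ i`:
with `k = j` this says `r i = r j`, so `D₁ = 0`, and otherwise `D₂ = 0`.
-/

/-- The resultant of two univariate polynomials `p, q` over a commutative ring,
defined as the determinant of the Sylvester matrix of `p` and `q` built from their
(actual) degrees: it has `q.natDegree` shifted rows of coefficients of `p` followed by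
`p.natDegree` shifted rows of coefficients of `q`. -/
noncomputable def sylResultant {R : Type} [CommRing R] (p q : Polynomial R) : R :=
  Matrix.det (Matrix.of fun i j : Fin (p.natDegree + q.natDegree) =>
    if (i : ℕ) < q.natDegree then
      (if (i : ℕ) ≤ (j : ℕ) ∧ (j : ℕ) ≤ (i : ℕ) + p.natDegree
        then p.coeff ((i : ℕ) + p.natDegree - (j : ℕ)) else 0)
    else
      (if (i : ℕ) - q.natDegree ≤ (j : ℕ) ∧ (j : ℕ) ≤ ((i : ℕ) - q.natDegree) + q.natDegree
        then q.coeff (((i : ℕ) - q.natDegree) + q.natDegree - (j : ℕ)) else 0))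

open Polynomial Finset

/-- Reversing both the rows and the columns of the matrix defining `sylResultant p q` gives the
transpose of `sylvester p q`. -/
theorem sylResultant_eq_resultant {R : Type} [CommRing R] (p q : R[X]) :
    sylResultant p q = resultant p q := by
  rw [sylResultant, resultant, ← Matrix.det_transpose (sylvester _ _ _ _),
    ← Matrix.det_submatrix_equiv_self Fin.revPerm (Matrix.of _)]
  congr 1
  ext i j
  have hj := j.2
  induction i using Fin.addCases with
  | left i | right i =>
    have hi := i.2
    simp only [Matrix.submatrix_apply, Matrix.transpose_apply, Matrix.of_apply, Fin.revPerm_apply,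
      Fin.rev, Fin.val_castAdd, Fin.val_natAdd, sylvester, Fin.addCases_left, Fin.addCases_right,
      Set.mem_Icc, Fin.val_fin_le, Fin.mk_le_mk, tsub_le_iff_right]
    split_ifs <;> first | rfl | omega | (congr 1; omega)

theorem resultant_prod_X_sub_C_left {R ι : Type*} [CommRing R] [Nontrivial R]
    (s : Finset ι) (a : ι → R) (g : R[X]) {n : ℕ} (hg : g.natDegree ≤ n) :
    resultant (∏ i ∈ s, (X - C (a i))) g (∏ i ∈ s, (X - C (a i))).natDegree n =
      ∏ i ∈ s, g.eval (a i) := by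
  rw [resultant_prod_left _ _ _ _ (by simp) hg]
  simp [hg]

theorem eval_prod_X_sub_C_self {R ι : Type*} [CommRing R] [Fintype ι] (r : ι → R) (i : ι) :
    (∏ k, (X - C (r k))).eval (r i) = 0 := by
  rw [eval_prod]
  exact prod_eq_zero (mem_univ i) (by simp)

section DividedDifference

variable {R : Type*} [CommRing R] {f : R[X]} {f1 f2 : R[X][X]}

theorem evalRingHom_comp_C (a : R) : (evalRingHom a).comp C = RingHom.id R :=
  eval₂RingHom_comp_C _ _

theorem X_sub_C_mul_map_evalRingHom_eq (hf1 : (X - C X) * f1 = f.map C - C f) (a : R) :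
    (X - C a) * f1.map (evalRingHom a) = f - C (f.eval a) := by
  simpa [Polynomial.map_map, evalRingHom_comp_C] using congrArg (map (evalRingHom a)) hf1

theorem X_sub_C_mul_C_mul_map_evalRingHom_eq (c : R)
    (hf2 : (X - C X) * C (C c) * f2 = eval₂ (C.comp C) ((C X + X) * C (C c)) f - C f) (a : R) :
    (X - C a) * C c * f2.map (evalRingHom a) = f.comp ((C a + X) * C c) - C (f.eval a) := by
  have h := congrArg (map (evalRingHom a)) hf2
  rw [← coe_mapRingHom, RingHom.map_sub, hom_eval₂, ← RingHom.comp_assoc, mapRingHom_comp_C,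
    RingHom.comp_assoc, evalRingHom_comp_C, RingHom.comp_id] at h
  simpa [comp] using h

theorem monic_of_X_sub_C_mul_eq [Nontrivial R] (hf : f.Monic) (hdeg : 0 < f.natDegree)
    (hf1 : (X - C X) * f1 = f.map C - C f) : f1.Monic := by
  refine (monic_X_sub_C X).of_mul_monic_left (hf1 ▸ (hf.map C).sub_of_left ?_)
  rw [hf.degree_map, degree_eq_natDegree hf.ne_zero]
  exact degree_C_le.trans_lt (by exact_mod_cast hdeg)

end DividedDifference

section Roots

variable {ι : Type*} [Fintype ι] [DecidableEq ι]

section Domain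

variable {R : Type*} [CommRing R] [IsDomain R] {r : ι → R} {f : R[X]} {f1 f2 : R[X][X]}

theorem map_evalRingHom_eq_prod_erase_of_X_sub_C_mul_eq (hf : f = ∏ k, (X - C (r k)))
    (hf1 : (X - C X) * f1 = f.map C - C f) (i : ι) :
    f1.map (evalRingHom (r i)) = ∏ j ∈ univ.erase i, (X - C (r j)) := by
  refine mul_left_cancel₀ (X_sub_C_ne_zero (r i)) ?_
  rw [X_sub_C_mul_map_evalRingHom_eq hf1, hf, eval_prod_X_sub_C_self, C_0, sub_zero,
    mul_prod_erase univ (fun j ↦ X - C (r j)) (mem_univ i)]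

theorem eval_resultant_eq_prod_erase (hf : f = ∏ k, (X - C (r k)))
    (hf1 : (X - C X) * f1 = f.map C - C f) (i : ι) :
    (resultant f1 f2).eval (r i) =
      ∏ j ∈ univ.erase i, (f2.map (evalRingHom (r i))).eval (r j) := by
  have hdeg : 0 < f.natDegree := by
    rw [hf, natDegree_prod _ _ fun k _ ↦ X_sub_C_ne_zero (r k)]
    simpa using Fintype.card_pos_iff.2 ⟨i⟩
  have hf1m : f1.Monic := monic_of_X_sub_C_mul_eq (hf ▸ monic_prod_X_sub_C r univ) hdeg hf1
  rw [← coe_evalRingHom, ← resultant_map_map, ← hf1m.natDegree_map (evalRingHom (r i)),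
    map_evalRingHom_eq_prod_erase_of_X_sub_C_mul_eq hf hf1 i,
    resultant_prod_X_sub_C_left _ _ _ natDegree_map_le]

end Domain

variable {K : Type*} [Field K] {r : ι → K} {f : K[X]} {f1 f2 : K[X][X]}

theorem map_evalRingHom_eq_prod_erase_of_X_sub_C_mul_C_mul_eq (h2 : (2 : K) ≠ 0)
    (hf : f = ∏ k, (X - C (r k)))
    (hf2 : (X - C X) * C (C 2⁻¹) * f2 = eval₂ (C.comp C) ((C X + X) * C (C 2⁻¹)) f - C f)
    (i : ι) :
    f2.map (evalRingHom (r i)) = ∏ k ∈ univ.erase i, ((C (r i) + X) * C 2⁻¹ - C (r k)) := by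
  -- the factor `k = i` of `f((r i + y)/2)` is `(y - r i)/2`, which cancels the left-hand side
  have hmid : (C (r i) + X) * C 2⁻¹ - C (r i) = (X - C (r i)) * C (2⁻¹ : K) := by
    have h2C : C (2⁻¹ : K) * 2 = 1 := by rw [← map_ofNat C 2, ← C_mul, inv_mul_cancel₀ h2, C_1]
    linear_combination C (r i) * h2C
  refine mul_left_cancel₀ (mul_ne_zero (X_sub_C_ne_zero (r i)) (C_ne_zero.2 (inv_ne_zero h2))) ?_
  rw [X_sub_C_mul_C_mul_map_evalRingHom_eq _ hf2, hf, eval_prod_X_sub_C_self, C_0, sub_zero,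
    Polynomial.prod_comp, ← mul_prod_erase univ _ (mem_univ i)]
  simp only [sub_comp, X_comp, C_comp, hmid]

theorem eval_resultant_eq_zero_iff (h2 : (2 : K) ≠ 0) (hf : f = ∏ k, (X - C (r k)))
    (hf1 : (X - C X) * f1 = f.map C - C f)
    (hf2 : (X - C X) * C (C 2⁻¹) * f2 = eval₂ (C.comp C) ((C X + X) * C (C 2⁻¹)) f - C f)
    (i : ι) :
    (resultant f1 f2).eval (r i) = 0 ↔ ∃ j ≠ i, ∃ k ≠ i, 2 * r k - r i - r j = 0 := by
  have hmid (j k : ι) : (r i + r j) * 2⁻¹ - r k = 0 ↔ 2 * r k - r i - r j = 0 := by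
    have h2' : (2 : K) * 2⁻¹ = 1 := mul_inv_cancel₀ h2
    constructor <;> intro h
    · linear_combination -2 * h + (r i + r j) * h2'
    · linear_combination -2⁻¹ * h + r k * h2'
  simp [eval_resultant_eq_prod_erase hf hf1,
    map_evalRingHom_eq_prod_erase_of_X_sub_C_mul_C_mul_eq h2 hf hf2, eval_prod, prod_eq_zero_iff,
    hmid]

end Roots

section Discriminants

variable {R ι : Type*} [CommRing R] [IsDomain R] [Fintype ι] [LinearOrder ι] (r : ι → R)

theorem prod_prod_sub_sq_eq_zero_iff :
    (∏ i, ∏ j, if i < j then (r i - r j) ^ 2 else 1) = 0 ↔ ¬ Function.Injective r := by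
  simp only [prod_eq_zero_iff, mem_univ, true_and, ite_eq_iff, one_ne_zero, and_false, or_false,
    pow_eq_zero_iff two_ne_zero, sub_eq_zero, Function.Injective, not_forall]
  constructor
  · rintro ⟨i, j, hij, h⟩
    exact ⟨i, j, h, hij.ne⟩
  · rintro ⟨i, j, h, hij⟩
    rcases lt_or_gt_of_ne hij with hij | hji
    · exact ⟨i, j, hij, h⟩
    · exact ⟨j, i, hji, h.symm⟩

theorem prod_prod_prod_two_mul_sub_sub_eq_zero_iff :
    (∏ i, ∏ j, ∏ k, if i < j ∧ k ≠ i ∧ k ≠ j then 2 * r k - r i - r j else 1) = 0 ↔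
      ∃ i j k, i ≠ j ∧ k ≠ i ∧ k ≠ j ∧ 2 * r k - r i - r j = 0 := by
  simp only [prod_eq_zero_iff, mem_univ, true_and, ite_eq_iff, one_ne_zero, and_false, or_false,
    and_assoc]
  constructor
  · rintro ⟨i, j, k, hij, hki, hkj, h⟩
    exact ⟨i, j, k, hij.ne, hki, hkj, h⟩
  · rintro ⟨i, j, k, hij, hki, hkj, h⟩
    rcases lt_or_gt_of_ne hij with hij | hji
    · exact ⟨i, j, k, hij, hki, hkj, h⟩
    · exact ⟨j, i, k, hji, hkj, hki, by linear_combination h⟩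

theorem exists_two_mul_sub_sub_eq_zero_iff :
    (∃ i, ∃ j ≠ i, ∃ k ≠ i, 2 * r k - r i - r j = 0) ↔
      (∏ i, ∏ j, if i < j then (r i - r j) ^ 2 else 1) *
        (∏ i, ∏ j, ∏ k, if i < j ∧ k ≠ i ∧ k ≠ j then 2 * r k - r i - r j else 1) = 0 := by
  rw [mul_eq_zero, prod_prod_sub_sq_eq_zero_iff, prod_prod_prod_two_mul_sub_sub_eq_zero_iff]
  simp only [Function.Injective, not_forall]
  constructor
  · rintro ⟨i, j, hji, k, hki, h⟩
    by_cases hkj : k = j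
    · subst hkj
      exact Or.inl ⟨i, k, by linear_combination -h, hji.symm⟩
    · exact Or.inr ⟨i, j, k, hji.symm, hki, hkj, h⟩
  · rintro (⟨i, j, h, hij⟩ | ⟨i, j, k, hij, hki, hkj, h⟩)
    · exact ⟨i, j, Ne.symm hij, j, Ne.symm hij, by rw [h]; ring⟩
    · exact ⟨i, j, Ne.symm hij, k, hki, h⟩

end Discriminants

theorem resultant_f1_f2_eq_zero_iff_D1_mul_D2_eq_zero_general
    (n : ℕ) (r : Fin n → ℂ) (f : Polynomial ℂ)
    (hf : f = ∏ i : Fin n, (Polynomial.X - Polynomial.C (r i)))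
    (f1 f2 : Polynomial (Polynomial ℂ))
    (hf1 : (Polynomial.X - Polynomial.C Polynomial.X) * f1 =
      f.map Polynomial.C - Polynomial.C f)
    (hf2 : (Polynomial.X - Polynomial.C Polynomial.X) *
        Polynomial.C (Polynomial.C (2⁻¹ : ℂ)) * f2 =
      Polynomial.eval₂ (Polynomial.C.comp Polynomial.C)
          ((Polynomial.C Polynomial.X + Polynomial.X) * Polynomial.C (Polynomial.C (2⁻¹ : ℂ)))
          f
        - Polynomial.C f) :
    sylResultant f (sylResultant f1 f2) = 0 ↔
      (∏ i : Fin n, ∏ j : Fin n, if i < j then (r i - r j) ^ 2 else 1) *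
        (∏ i : Fin n, ∏ j : Fin n, ∏ k : Fin n,
          if i < j ∧ k ≠ i ∧ k ≠ j then 2 * r k - r i - r j else 1) = 0 := by
  rw [sylResultant_eq_resultant, sylResultant_eq_resultant, ← exists_two_mul_sub_sub_eq_zero_iff,
    hf, resultant_prod_X_sub_C_left _ _ _ le_rfl, prod_eq_zero_iff]
  simp only [mem_univ, true_and, eval_resultant_eq_zero_iff two_ne_zero hf hf1 hf2]

/-- Let `f` be a monic polynomial of degree `n ≥ 3` over `ℂ` with roots
`r 0, …, r (n-1)` (with multiplicity). Bivariate polynomials in `x, y` are represented as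
elements of `Polynomial (Polynomial ℂ)`, the outer variable being `y` and the inner one
`x`; `f₁` and `f₂` are determined by `(y - x)·f₁ = f(y) - f(x)` and
`((y - x)/2)·f₂ = f((x+y)/2) - f(x)`.  Then
`Res_x(f, Res_y(f₁, f₂)) = 0 ↔ D₁ · D₂ = 0`, where `D₁ = ∏_{i<j} (r i - r j)²` and
`D₂ = ∏_{i<j, k∉{i,j}} (2 r k - r i - r j)` are the first and second discriminants. -/
theorem resultant_f1_f2_eq_zero_iff_D1_mul_D2_eq_zero
    (n : ℕ) (hn : 3 ≤ n) (r : Fin n → ℂ) (f : Polynomial ℂ)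
    (hf : f = ∏ i : Fin n, (Polynomial.X - Polynomial.C (r i)))
    (f1 f2 : Polynomial (Polynomial ℂ))
    (hf1 : (Polynomial.X - Polynomial.C Polynomial.X) * f1 =
      f.map Polynomial.C - Polynomial.C f)
    (hf2 : (Polynomial.X - Polynomial.C Polynomial.X) *
        Polynomial.C (Polynomial.C (2⁻¹ : ℂ)) * f2 =
      Polynomial.eval₂ (Polynomial.C.comp Polynomial.C)
          ((Polynomial.C Polynomial.X + Polynomial.X) * Polynomial.C (Polynomial.C (2⁻¹ : ℂ)))
          f
        - Polynomial.C f) :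
    sylResultant f (sylResultant f1 f2) = 0 ↔
      (∏ i : Fin n, ∏ j : Fin n, if i < j then (r i - r j) ^ 2 else 1) *
        (∏ i : Fin n, ∏ j : Fin n, ∏ k : Fin n,
          if i < j ∧ k ≠ i ∧ k ≠ j then 2 * r k - r i - r j else 1) = 0 :=
  resultant_f1_f2_eq_zero_iff_D1_mul_D2_eq_zero_general n r f hf f1 f2 hf1 hf2
end

section
/- For the generic monic polynomial f of degree n ≥ 3 over ℚ[a_0, …, a_{n-1}], the determinant polynomial H, regarded as a polynomial in x with coefficients in ℚ[a_0, …, a_{n-1}], has degree in x exactly (n−1)(n−2)/2. -/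
open Polynomial Matrix Finset

namespace Polynomial

variable {R : Type*}

theorem coeff_prod_sum_of_natDegree_le [CommSemiring R] {ι : Type*} (s : Finset ι)
    (f : ι → R[X]) (d : ι → ℕ) (h : ∀ i ∈ s, (f i).natDegree ≤ d i) :
    (∏ i ∈ s, f i).coeff (∑ i ∈ s, d i) = ∏ i ∈ s, (f i).coeff (d i) := by
  induction s using Finset.cons_induction with
  | empty => simp
  | cons a s ha ih =>
    have hs : ∀ i ∈ s, (f i).natDegree ≤ d i := fun i hi => h i (mem_cons_of_mem hi)
    rw [prod_cons, sum_cons, prod_cons,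
      coeff_mul_add_eq_of_natDegree_le (h a (mem_cons_self a s))
        ((natDegree_prod_le s f).trans (sum_le_sum hs)), ih hs]

theorem coeff_comp_neg_X [CommRing R] (p : R[X]) (k : ℕ) :
    (p.comp (-X)).coeff k = p.coeff k * (-1) ^ k := by
  simpa using comp_C_mul_X_coeff (p := p) (r := -1) (n := k)

theorem comp_neg_X_eq_neg_of_coeff_eq_zero [CommRing R] {p : R[X]}
    (h : ∀ k, Even k → p.coeff k = 0) : p.comp (-X) = -p := by
  ext k
  rw [coeff_comp_neg_X, coeff_neg]
  rcases Nat.even_or_odd k with hk | hk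
  · simp [h k hk]
  · simp [hk.neg_one_pow]

theorem eq_zero_of_mul_eq_mul_comp_neg_X [CommRing R] [IsDomain R] {k w : R[X]}
    (hk : IsCoprime k (k.comp (-X))) (hw : w.natDegree < k.natDegree)
    (h : w * k = w.comp (-X) * k.comp (-X)) : w = 0 :=
  eq_zero_of_dvd_of_natDegree_lt
    (hk.symm.dvd_of_dvd_mul_right ⟨w.comp (-X), by rw [h, mul_comm]⟩)
    (by rwa [natDegree_comp, natDegree_neg, natDegree_X, mul_one])

theorem coeff_hasseDeriv_natDegree_sub [Semiring R] {f : R[X]} (hf : f.Monic) (k : ℕ) :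
    (hasseDeriv k f).coeff (f.natDegree - k) = (f.natDegree.choose k : R) := by
  rw [hasseDeriv_coeff]
  rcases le_or_gt k f.natDegree with hk | hk
  · rw [Nat.sub_add_cancel hk, hf.coeff_natDegree, mul_one]
  · rw [Nat.choose_eq_zero_of_lt hk, coeff_eq_zero_of_natDegree_lt (by omega), mul_zero,
      Nat.cast_zero]

end Polynomial

namespace Matrix

variable {ι R : Type*} [Fintype ι] [CommRing R] {M : Matrix ι ι R[X]} {r c : ι → ℕ}

theorem prod_perm_natDegree_le_and_coeff (hM : ∀ i j k, r i < k + c j → (M i j).coeff k = 0)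
    (σ : Equiv.Perm ι) :
    (∏ i, M (σ i) i).natDegree ≤ ∑ i, r i - ∑ i, c i ∧
      (∏ i, M (σ i) i).coeff (∑ i, r i - ∑ i, c i) =
        ∏ i, (M (σ i) i).coeff (r (σ i) - c i) := by
  by_cases hσ : ∀ i, c i ≤ r (σ i)
  · have hdeg : ∀ i ∈ univ, (M (σ i) i).natDegree ≤ r (σ i) - c i := fun i _ =>
      natDegree_le_iff_coeff_eq_zero.2 fun k hk => hM _ _ _ (by omega)
    have hsum : ∑ i, (r (σ i) - c i) = ∑ i, r i - ∑ i, c i := by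
      rw [sum_tsub_distrib _ fun i _ => hσ i, Equiv.sum_comp σ r]
    rw [← hsum]
    exact ⟨(natDegree_prod_le _ _).trans (sum_le_sum hdeg),
      coeff_prod_sum_of_natDegree_le _ _ _ hdeg⟩
  · obtain ⟨i, hi⟩ := not_forall.1 hσ
    have hzero : M (σ i) i = 0 := Polynomial.ext fun k => by
      simpa using hM (σ i) i k (by omega)
    rw [prod_eq_zero (f := fun j => M (σ j) j) (mem_univ i) hzero,
      prod_eq_zero (mem_univ i) (by rw [hzero, coeff_zero])]
    simp

variable [DecidableEq ι]

theorem natDegree_det_le_of_coeff_eq_zero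
    (hM : ∀ i j k, r i < k + c j → (M i j).coeff k = 0) :
    M.det.natDegree ≤ ∑ i, r i - ∑ i, c i := by
  rw [det_apply]
  exact natDegree_sum_le_of_forall_le _ _ fun σ _ =>
    (natDegree_smul_le _ _).trans (prod_perm_natDegree_le_and_coeff hM σ).1

theorem coeff_det_of_coeff_eq_zero (hM : ∀ i j k, r i < k + c j → (M i j).coeff k = 0) :
    M.det.coeff (∑ i, r i - ∑ i, c i) = (of fun i j => (M i j).coeff (r i - c j)).det := by
  rw [det_apply, det_apply, finsetSum_coeff]
  refine sum_congr rfl fun σ _ => ?_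
  rw [coeff_smul, (prod_perm_natDegree_le_and_coeff hM σ).2]
  rfl

end Matrix

/-- The matrix `(C(n, 2q-p+1))` in the paper's 1-indexed notation: the leading coefficients of
the entries of the matrix defining `Hdet n f` for monic `f` of degree `n`. -/
def binomMatrix (R : Type*) [Semiring R] (n : ℕ) : Matrix (Fin (n - 2)) (Fin (n - 2)) R :=
  of fun p q => if (p : ℕ) ≤ 2 * q + 1 then (n.choose (2 * q + 2 - p) : R) else 0

theorem vecMul_binomMatrix {R : Type*} [CommRing R] [DecidableEq R] (n : ℕ)
    (w : Fin (n - 2) → R) (q : Fin (n - 2)) :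
    (w ᵥ* binomMatrix R n) q = (ofFn (n - 2) w * ((X + 1) ^ n - 1)).coeff (2 * q + 2) := by
  rw [ofFn_eq_sum_monomial, sum_mul, finsetSum_coeff, vecMul, dotProduct]
  refine sum_congr rfl fun p _ => ?_
  rw [← C_mul_X_pow_eq_monomial, mul_assoc, coeff_C_mul, coeff_X_pow_mul', coeff_sub,
    coeff_X_add_one_pow, coeff_one, binomMatrix, of_apply]
  split_ifs <;> first | omega | simp_all

theorem isCoprime_geomSum_comp_neg_X {n : ℕ} (hn : n ≠ 0) :
    IsCoprime (∑ i ∈ range n, (X + 1 : ℂ[X]) ^ i)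
      ((∑ i ∈ range n, (X + 1 : ℂ[X]) ^ i).comp (-X)) := by
  rw [isCoprime_iff_aeval_ne_zero_of_isAlgClosed ℂ ℂ]
  intro z
  by_contra! h
  simp only [aeval_comp, map_sum, map_pow, map_add, aeval_X, map_one, map_neg] at h
  have hroot : ∀ y : ℂ, ∑ i ∈ range n, (y + 1) ^ i = 0 → ‖y + 1‖ = 1 := fun y hy =>
    Complex.norm_eq_one_of_pow_eq_one
      (by simpa [hy, sub_eq_zero] using (geom_sum_mul (y + 1) n).symm) hn
  have h1 : ‖1 + z‖ = 1 := by rw [add_comm]; exact hroot z h.1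
  have h2 : ‖1 - z‖ = 1 := by rw [← neg_add_eq_sub]; exact hroot (-z) h.2
  have hz : z = 0 := by
    have hpar := parallelogram_law_with_norm ℝ (1 : ℂ) z
    rw [h1, h2, norm_one] at hpar
    exact norm_eq_zero.1 (by nlinarith [norm_nonneg z])
  simp [hz, hn] at h

theorem det_binomMatrix_complex_ne_zero (n : ℕ) : (binomMatrix ℂ n).det ≠ 0 := by
  classical
  intro hdet
  obtain ⟨w, hw0, hw⟩ := exists_vecMul_eq_zero_iff.2 hdet
  generalize hWdef : ofFn (n - 2) w = W
  have hW : W ≠ 0 := fun h => hw0 (injective_ofFn _ (by rw [hWdef, h, map_zero]))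
  have hWdeg : W.natDegree < n - 2 :=
    (natDegree_lt_iff_degree_lt hW).2 (hWdef ▸ ofFn_degree_lt w)
  have hk := geom_sum_mul (X + 1 : ℂ[X]) n
  rw [add_sub_cancel_right] at hk
  have hcop := isCoprime_geomSum_comp_neg_X (n := n) (by omega)
  generalize ∑ i ∈ range n, (X + 1 : ℂ[X]) ^ i = k at hcop hk
  have hkXdeg : (k * X).natDegree = n := by
    rw [hk, ← C_1, natDegree_sub_C, natDegree_pow, natDegree_X_add_C, mul_one]
  have hkdeg : k.natDegree = n - 1 := by
    have hk0 : k ≠ 0 := by rintro rfl; simp at hkXdeg; omega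
    rw [natDegree_mul_X hk0] at hkXdeg
    omega
  have hodd : ∀ j, Even j → (W * (k * X)).coeff j = 0 := by
    rintro j ⟨m, rfl⟩
    rcases m with _ | q
    · simp [mul_coeff_zero]
    by_cases hq : q < n - 2
    · rw [hk, show q + 1 + (q + 1) = 2 * (⟨q, hq⟩ : Fin (n - 2)) + 2 by simp; ring,
        ← hWdef, ← vecMul_binomMatrix, hw, Pi.zero_apply]
    · refine coeff_eq_zero_of_natDegree_lt (natDegree_mul_le.trans_lt ?_)
      omega
  have hsym : W * k = W.comp (-X) * k.comp (-X) := by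
    have h := comp_neg_X_eq_neg_of_coeff_eq_zero hodd
    simp only [mul_comp, X_comp] at h
    exact mul_right_cancel₀ X_ne_zero (by linear_combination h)
  exact hW (eq_zero_of_mul_eq_mul_comp_neg_X hcop (by omega) hsym)

theorem binomMatrix_map_intCast (R : Type*) [CommRing R] (n : ℕ) :
    (binomMatrix ℤ n).map (Int.castRingHom R) = binomMatrix R n := by
  ext p q
  simp only [map_apply, binomMatrix, of_apply]
  split_ifs <;> simp

theorem det_binomMatrix_eq_intCast (R : Type*) [CommRing R] (n : ℕ) :
    (binomMatrix R n).det = ((binomMatrix ℤ n).det : R) := by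
  rw [← binomMatrix_map_intCast, ← RingHom.mapMatrix_apply, ← RingHom.map_det, eq_intCast]

theorem det_binomMatrix_ne_zero (R : Type*) [CommRing R] [CharZero R] (n : ℕ) :
    (binomMatrix R n).det ≠ 0 := by
  rw [det_binomMatrix_eq_intCast, Int.cast_ne_zero]
  intro h
  apply det_binomMatrix_complex_ne_zero n
  rw [det_binomMatrix_eq_intCast, h, Int.cast_zero]

theorem sum_add_sub_sum_two_mul_add_two (n : ℕ) :
    ∑ p : Fin (n - 2), (n + (p : ℕ)) - ∑ q : Fin (n - 2), (2 * (q : ℕ) + 2) =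
      (n - 1) * (n - 2) / 2 := by
  rw [Fin.sum_univ_eq_sum_range (fun i => n + i), Fin.sum_univ_eq_sum_range (fun i => 2 * i + 2),
    sum_add_distrib, sum_add_distrib, ← mul_sum]
  have hT := sum_range_id_mul_two (n - 2)
  simp only [sum_const, card_range, smul_eq_mul]
  generalize ∑ i ∈ range (n - 2), i = T at hT ⊢
  rcases Nat.lt_or_ge n 3 with hn | hn
  · interval_cases n <;> simp_all
  obtain ⟨t, rfl⟩ : ∃ t, n = t + 3 := ⟨n - 3, by omega⟩
  simp only [show t + 3 - 2 = t + 1 by omega, show t + 3 - 1 = t + 2 by omega,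
    Nat.add_sub_cancel] at hT ⊢
  ring_nf at hT ⊢
  omega

section Hdet

variable {R : Type} [CommRing R]

noncomputable def hdetMatrix (n : ℕ) (f : R[X]) : Matrix (Fin (n - 2)) (Fin (n - 2)) R[X] :=
  of fun p q => if (p : ℕ) ≤ 2 * (q : ℕ) + 1 then hasseDeriv (2 * (q : ℕ) + 2 - (p : ℕ)) f else 0

theorem Hdet_eq_det_hdetMatrix (n : ℕ) (f : R[X]) : Hdet n f = (hdetMatrix n f).det := rfl

theorem coeff_hdetMatrix_eq_zero {n : ℕ} {f : R[X]} (hf : f.natDegree ≤ n) (p q : Fin (n - 2))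
    (k : ℕ) (hk : n + p < k + (2 * q + 2)) : (hdetMatrix n f p q).coeff k = 0 := by
  rw [hdetMatrix, of_apply]
  split_ifs
  · rw [hasseDeriv_coeff, coeff_eq_zero_of_natDegree_lt (by omega), mul_zero]
  · rw [coeff_zero]

theorem coeff_hdetMatrix_of_monic {f : R[X]} (hf : f.Monic) :
    (of fun p q => (hdetMatrix f.natDegree f p q).coeff (f.natDegree + p - (2 * q + 2))) =
      binomMatrix R f.natDegree := by
  ext p q
  rw [of_apply, hdetMatrix, binomMatrix, of_apply, of_apply]
  split_ifs
  · rw [show f.natDegree + p - (2 * q + 2) = f.natDegree - (2 * q + 2 - p) by omega,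
      coeff_hasseDeriv_natDegree_sub hf]
  · rw [coeff_zero]

theorem natDegree_Hdet_of_monic [CharZero R] {f : R[X]} (hf : f.Monic) :
    (Hdet f.natDegree f).natDegree = (f.natDegree - 1) * (f.natDegree - 2) / 2 := by
  have hM := coeff_hdetMatrix_eq_zero (le_refl f.natDegree) (f := f)
  rw [← sum_add_sub_sum_two_mul_add_two, Hdet_eq_det_hdetMatrix]
  refine le_antisymm (natDegree_det_le_of_coeff_eq_zero hM) (le_natDegree_of_ne_zero ?_)
  rw [coeff_det_of_coeff_eq_zero hM, coeff_hdetMatrix_of_monic hf]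
  exact det_binomMatrix_ne_zero R _

end Hdet

theorem Hdet_natDegree_general
    (n : ℕ)
    (f : Polynomial (MvPolynomial (Fin n) ℚ))
    (hf : f = Polynomial.X ^ n +
      ∑ i : Fin n, Polynomial.C (MvPolynomial.X i) * Polynomial.X ^ (i : ℕ)) :
    (Hdet n f).natDegree = (n - 1) * (n - 2) / 2 := by
  have hlow := degree_sum_fin_lt (fun i : Fin n => (MvPolynomial.X i : MvPolynomial (Fin n) ℚ))
  have hmonic : f.Monic := hf ▸ monic_X_pow_add hlow
  have hdeg : f.natDegree = n := by
    rw [hf, natDegree_add_eq_left_of_degree_lt (by rwa [degree_X_pow]), natDegree_X_pow]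
  have h := natDegree_Hdet_of_monic hmonic
  rwa [hdeg] at h

/-- For the generic monic polynomial
`f = xⁿ + a_{n-1} xⁿ⁻¹ + ⋯ + a₁ x + a₀` of degree `n ≥ 3` over `ℚ[a₀, …, a_{n-1}]`,
the determinant polynomial `H` has degree exactly `(n-1)(n-2)/2` in `x`. -/
theorem Hdet_natDegree
    (n : ℕ) (hn : 3 ≤ n)
    (f : Polynomial (MvPolynomial (Fin n) ℚ))
    (hf : f = Polynomial.X ^ n +
      ∑ i : Fin n, Polynomial.C (MvPolynomial.X i) * Polynomial.X ^ (i : ℕ)) :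
    (Hdet n f).natDegree = (n - 1) * (n - 2) / 2 :=
  Hdet_natDegree_general n f hf
end
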